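/- arXiv:1812.11603 — 16 statements merged into one kernel-verified Lean document; each statement's English description precedes it below -/
import Mathlib

section
/- Let V be a finite-dimensional real vector space, h a symmetric bilinear form on V, l a linear functional on V, and l2 a real number. Suppose P is a symmetric bilinear form on the dual V*, n ∈ V and n2 ∈ ℝ satisfy the hypersurface-data relations: (i) for all covectors ω and vectors X, P(ω, h(X,·)) + ω(n)·l(X) = ω(X); (ii) P(·, l) + l2·(evaluation at n) = 0 as a functional on V*; (iii) l(n) + n2·l2 = 1; (iv) h(n,·) + n2·l = 0 as a functional on V. Then, given Z ∈ V* and W ∈ ℝ, there exists a vector v ∈ V with l(v) = W and h(v,·) = Z if and only if Z(n) + n2·W = 0; moreover, in that case the solution is unique and is given by v = P(Z,·)♯ + W·n, i.e. ω(v) = P(Z, ω) + W·ω(n) for every covector ω. -/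
/-!
By (i) and the symmetry of `P`, `(Z, W) ↦ P(Z, ·)♯ + W n` is a left inverse of `v ↦ (h v, l v)`,
so a solution of `h v = Z`, `l v = W` is given by that formula, hence unique. Conversely the
formula defines an element of the double dual, i.e. of `V` by reflexivity, which solves the
system by (ii)–(iv) as soon as the obstruction `Z n + n2 W` forced by (iv) vanishes.
-/

open Module

namespace HypersurfaceData

variable {R M : Type*} [CommRing R] [AddCommGroup M] [Module R M]
  {h : M →ₗ[R] M →ₗ[R] R} {l : Dual R M} {P : Dual R M →ₗ[R] Dual R M →ₗ[R] R}
  {n : M} {n2 l2 : R} {Z : Dual R M} {W : R} {v : M}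

theorem obstruction_eq_zero (hsymm : ∀ X Y : M, h X Y = h Y X)
    (c4 : ∀ X : M, h n X + n2 * l X = 0) (hl : l v = W) (hh : h v = Z) :
    Z n + n2 * W = 0 := by
  rw [← hh, ← hl, ← hsymm]
  exact c4 v

theorem apply_eq_of_solution (Psymm : ∀ ω χ : Dual R M, P ω χ = P χ ω)
    (c1 : ∀ (ω : Dual R M) (X : M), P ω (h X) + ω n * l X = ω X)
    (hl : l v = W) (hh : h v = Z) (ω : Dual R M) :
    ω v = P Z ω + W * ω n := by
  rw [← c1 ω v, hh, hl, Psymm]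
  ring

theorem eq_of_solutions [IsReflexive R M] (Psymm : ∀ ω χ : Dual R M, P ω χ = P χ ω)
    (c1 : ∀ (ω : Dual R M) (X : M), P ω (h X) + ω n * l X = ω X) {v₁ v₂ : M}
    (hl₁ : l v₁ = W) (hh₁ : h v₁ = Z) (hl₂ : l v₂ = W) (hh₂ : h v₂ = Z) :
    v₁ = v₂ :=
  (bijective_dual_eval R M).1 <| LinearMap.ext fun ω => by
    simp only [Dual.eval_apply, apply_eq_of_solution Psymm c1 hl₁ hh₁,
      apply_eq_of_solution Psymm c1 hl₂ hh₂]

variable (P n) in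
/-- The vector `P(Z, ·)♯ + W n`. -/
noncomputable def reconstruct [IsReflexive R M] (Z : Dual R M) (W : R) : M :=
  (evalEquiv R M).symm (P Z + W • Dual.eval R M n)

variable [IsReflexive R M]

@[simp]
theorem apply_reconstruct (ω : Dual R M) : ω (reconstruct P n Z W) = P Z ω + W * ω n := by
  simp [reconstruct]

theorem rigging_reconstruct (c2 : ∀ ω : Dual R M, P ω l + l2 * ω n = 0)
    (c3 : l n + n2 * l2 = 1) (hZ : Z n + n2 * W = 0) :
    l (reconstruct P n Z W) = W := by
  rw [apply_reconstruct]
  linear_combination c2 Z - l2 * hZ + W * c3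

theorem form_reconstruct (hsymm : ∀ X Y : M, h X Y = h Y X)
    (c1 : ∀ (ω : Dual R M) (X : M), P ω (h X) + ω n * l X = ω X)
    (c4 : ∀ X : M, h n X + n2 * l X = 0) (hZ : Z n + n2 * W = 0) :
    h (reconstruct P n Z W) = Z := by
  ext X
  rw [hsymm, apply_reconstruct]
  linear_combination c1 Z X + W * hsymm X n + W * c4 X - l X * hZ

end HypersurfaceData

open HypersurfaceData in
/-- Vector reconstruction lemma (Mars 2013, Lemma 2.2), pointwise linear-algebra version. -/
theorem stmt_0
    (V : Type*) [AddCommGroup V] [Module ℝ V] [FiniteDimensional ℝ V]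
    (h : V →ₗ[ℝ] V →ₗ[ℝ] ℝ) (hsymm : ∀ X Y : V, h X Y = h Y X)
    (l : Module.Dual ℝ V) (l2 : ℝ)
    (P : Module.Dual ℝ V →ₗ[ℝ] Module.Dual ℝ V →ₗ[ℝ] ℝ)
    (Psymm : ∀ ω χ : Module.Dual ℝ V, P ω χ = P χ ω)
    (n : V) (n2 : ℝ)
    (c1 : ∀ (ω : Module.Dual ℝ V) (X : V), P ω (h X) + ω n * l X = ω X)
    (c2 : ∀ ω : Module.Dual ℝ V, P ω l + l2 * ω n = 0)
    (c3 : l n + n2 * l2 = 1)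
    (c4 : ∀ X : V, h n X + n2 * l X = 0)
    (Z : Module.Dual ℝ V) (W : ℝ) :
    ((∃ v : V, l v = W ∧ h v = Z) ↔ Z n + n2 * W = 0) ∧
    (∀ v : V, l v = W → h v = Z →
      ∀ ω : Module.Dual ℝ V, ω v = P Z ω + W * ω n) ∧
    (∀ v₁ v₂ : V, l v₁ = W → h v₁ = Z → l v₂ = W → h v₂ = Z → v₁ = v₂) :=
  ⟨⟨fun ⟨_, hl, hh⟩ => obstruction_eq_zero hsymm c4 hl hh,
      fun hZ => ⟨reconstruct P n Z W, rigging_reconstruct c2 c3 hZ,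
        form_reconstruct hsymm c1 c4 hZ⟩⟩,
    fun _ => apply_eq_of_solution Psymm c1,
    fun _ _ => eq_of_solutions Psymm c1⟩
end

section
/- With hypersurface data (h, l, l2) and inverse data (P, n, n2) satisfying the four compatibility relations, suppose the data is transformed by a rigging transformation with gauge parameters λ ≠ 0 and a vector v ∈ V, i.e. h' = h, l' = λ·(l + h(v,·)), l2' = λ²·(l2 + 2 l(v) + h(v,v)). Then the transformed inverse data n2' = n2/λ², n' = (1/λ)(n − n2·v), and P'(ω,χ) = P(ω,χ) + n2·ω(v)·χ(v) − ω(v)·χ(n) − χ(v)·ω(n) satisfy the same four compatibility relations with respect to (h', l', l2'). -/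
/-!
A rigging transformation with gauge parameters `(λ, v)` is the composite of the shift
`l ↦ l + h(v, ·)` followed by the rescaling `l ↦ λ l`, and each of the two preserves the
compatibility relations between the hypersurface data and its inverse data. The rescaling is
immediate from bilinearity. For the shift, expanding the relations produces, besides the
original ones, only the combinations `h(n, ·) + n₂ l` and `l(n) + n₂ l₂ - 1`, which vanish.
-/

open Module

section CommRing

variable {𝕜 V : Type*} [CommRing 𝕜] [AddCommGroup V] [Module 𝕜 V]

structure IsInverseData (h : V →ₗ[𝕜] V →ₗ[𝕜] 𝕜) (l : Dual 𝕜 V) (l2 : 𝕜)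
    (P : Dual 𝕜 V →ₗ[𝕜] Dual 𝕜 V →ₗ[𝕜] 𝕜) (n : V) (n2 : 𝕜) : Prop where
  P_h : ∀ (ω : Dual 𝕜 V) (X : V), P ω (h X) + ω n * l X = ω X
  P_l : ∀ ω : Dual 𝕜 V, P ω l + l2 * ω n = 0
  l_n : l n + n2 * l2 = 1
  h_n : ∀ X : V, h n X + n2 * l X = 0

/-- The inverse form `P` after the rigging transformation with `λ = 1`. -/
def shiftInverseForm (P : Dual 𝕜 V →ₗ[𝕜] Dual 𝕜 V →ₗ[𝕜] 𝕜) (n : V) (n2 : 𝕜) (v : V) :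
    Dual 𝕜 V →ₗ[𝕜] Dual 𝕜 V →ₗ[𝕜] 𝕜 :=
  LinearMap.mk₂ 𝕜 (fun ω χ => P ω χ + n2 * ω v * χ v - ω v * χ n - χ v * ω n)
    (fun _ _ _ => by simp only [map_add, LinearMap.add_apply]; ring)
    (fun _ _ _ => by simp only [map_smul, LinearMap.smul_apply, smul_eq_mul]; ring)
    (fun _ _ _ => by simp only [map_add, LinearMap.add_apply]; ring)
    (fun _ _ _ => by simp only [map_smul, LinearMap.smul_apply, smul_eq_mul]; ring)

@[simp]
theorem shiftInverseForm_apply (P : Dual 𝕜 V →ₗ[𝕜] Dual 𝕜 V →ₗ[𝕜] 𝕜) (n : V) (n2 : 𝕜)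
    (v : V) (ω χ : Dual 𝕜 V) :
    shiftInverseForm P n n2 v ω χ = P ω χ + n2 * ω v * χ v - ω v * χ n - χ v * ω n :=
  rfl

theorem IsInverseData.shift {h : V →ₗ[𝕜] V →ₗ[𝕜] 𝕜} {l : Dual 𝕜 V} {l2 : 𝕜}
    {P : Dual 𝕜 V →ₗ[𝕜] Dual 𝕜 V →ₗ[𝕜] 𝕜} {n : V} {n2 : 𝕜}
    (hd : IsInverseData h l l2 P n n2) (hsymm : ∀ X Y : V, h X Y = h Y X) (v : V) :
    IsInverseData h (l + h v) (l2 + 2 * l v + h v v) (shiftInverseForm P n n2 v)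
      (n - n2 • v) n2 where
  P_h ω X := by
    simp only [shiftInverseForm_apply, map_sub, map_smul, LinearMap.add_apply, smul_eq_mul]
    rw [hsymm X v, hsymm X n]
    linear_combination hd.P_h ω X - ω v * hd.h_n X
  P_l ω := by
    simp only [shiftInverseForm_apply, map_sub, map_smul, map_add, smul_eq_mul]
    rw [hsymm v n]
    linear_combination hd.P_l ω + hd.P_h ω v - ω v * hd.l_n - ω v * hd.h_n v
  l_n := by
    simp only [map_sub, map_smul, LinearMap.add_apply, smul_eq_mul]
    rw [hsymm v n]
    linear_combination hd.l_n + hd.h_n v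
  h_n X := by
    simp only [map_sub, map_smul, LinearMap.sub_apply, LinearMap.smul_apply,
      LinearMap.add_apply, smul_eq_mul]
    rw [hsymm v X]
    linear_combination hd.h_n X

end CommRing

section Field

variable {𝕜 V : Type*} [Field 𝕜] [AddCommGroup V] [Module 𝕜 V]

theorem IsInverseData.rescale {h : V →ₗ[𝕜] V →ₗ[𝕜] 𝕜} {l : Dual 𝕜 V} {l2 : 𝕜}
    {P : Dual 𝕜 V →ₗ[𝕜] Dual 𝕜 V →ₗ[𝕜] 𝕜} {n : V} {n2 : 𝕜}
    (hd : IsInverseData h l l2 P n n2) {lam : 𝕜} (hlam : lam ≠ 0) :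
    IsInverseData h (lam • l) (lam ^ 2 * l2) P (lam⁻¹ • n) (n2 / lam ^ 2) where
  P_h ω X := by
    simp only [map_smul, LinearMap.smul_apply, smul_eq_mul]
    field_simp
    exact hd.P_h ω X
  P_l ω := by
    simp only [map_smul, smul_eq_mul]
    field_simp
    linear_combination lam * hd.P_l ω
  l_n := by
    simp only [map_smul, LinearMap.smul_apply, smul_eq_mul]
    field_simp
    exact hd.l_n
  h_n X := by
    simp only [map_smul, LinearMap.smul_apply, smul_eq_mul]
    field_simp
    linear_combination hd.h_n X

end Field

theorem stmt_2_general
    (V : Type*) [AddCommGroup V] [Module ℝ V]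
    (h : V →ₗ[ℝ] V →ₗ[ℝ] ℝ) (hsymm : ∀ X Y : V, h X Y = h Y X)
    (l : Module.Dual ℝ V) (l2 : ℝ)
    (P : Module.Dual ℝ V →ₗ[ℝ] Module.Dual ℝ V →ₗ[ℝ] ℝ)
    (n : V) (n2 : ℝ)
    (c1 : ∀ (ω : Module.Dual ℝ V) (X : V), P ω (h X) + ω n * l X = ω X)
    (c2 : ∀ ω : Module.Dual ℝ V, P ω l + l2 * ω n = 0)
    (c3 : l n + n2 * l2 = 1)
    (c4 : ∀ X : V, h n X + n2 * l X = 0)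
    (lam : ℝ) (hlam : lam ≠ 0) (v : V) :
    let l' : Module.Dual ℝ V := lam • (l + h v)
    let l2' : ℝ := lam ^ 2 * (l2 + 2 * l v + h v v)
    let n' : V := lam⁻¹ • (n - n2 • v)
    let n2' : ℝ := n2 / lam ^ 2
    let P' : Module.Dual ℝ V → Module.Dual ℝ V → ℝ := fun ω χ =>
      P ω χ + n2 * ω v * χ v - ω v * χ n - χ v * ω n
    (∀ (ω : Module.Dual ℝ V) (X : V), P' ω (h X) + ω n' * l' X = ω X) ∧
    (∀ ω : Module.Dual ℝ V, P' ω l' + l2' * ω n' = 0) ∧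
    (l' n' + n2' * l2' = 1) ∧
    (∀ X : V, h n' X + n2' * l' X = 0) := by
  have hd' := ((IsInverseData.mk c1 c2 c3 c4).shift hsymm v).rescale hlam
  exact ⟨hd'.P_h, hd'.P_l, hd'.l_n, hd'.h_n⟩

/-- The transformed inverse data (n2', n', P') of a rigging transformation
l' = λ(l + h(v,·)) satisfies the four hypersurface-data compatibility relations
with respect to the transformed data (h' = h, l', l2'). -/
theorem stmt_2
    (V : Type*) [AddCommGroup V] [Module ℝ V] [FiniteDimensional ℝ V]
    (h : V →ₗ[ℝ] V →ₗ[ℝ] ℝ) (hsymm : ∀ X Y : V, h X Y = h Y X)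
    (l : Module.Dual ℝ V) (l2 : ℝ)
    (P : Module.Dual ℝ V →ₗ[ℝ] Module.Dual ℝ V →ₗ[ℝ] ℝ)
    (Psymm : ∀ ω χ : Module.Dual ℝ V, P ω χ = P χ ω)
    (n : V) (n2 : ℝ)
    (c1 : ∀ (ω : Module.Dual ℝ V) (X : V), P ω (h X) + ω n * l X = ω X)
    (c2 : ∀ ω : Module.Dual ℝ V, P ω l + l2 * ω n = 0)
    (c3 : l n + n2 * l2 = 1)
    (c4 : ∀ X : V, h n X + n2 * l X = 0)
    (lam : ℝ) (hlam : lam ≠ 0) (v : V) :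
    let l' : Module.Dual ℝ V := lam • (l + h v)
    let l2' : ℝ := lam ^ 2 * (l2 + 2 * l v + h v v)
    let n' : V := lam⁻¹ • (n - n2 • v)
    let n2' : ℝ := n2 / lam ^ 2
    let P' : Module.Dual ℝ V → Module.Dual ℝ V → ℝ := fun ω χ =>
      P ω χ + n2 * ω v * χ v - ω v * χ n - χ v * ω n
    (∀ (ω : Module.Dual ℝ V) (X : V), P' ω (h X) + ω n' * l' X = ω X) ∧
    (∀ ω : Module.Dual ℝ V, P' ω l' + l2' * ω n' = 0) ∧
    (l' n' + n2' * l2' = 1) ∧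
    (∀ X : V, h n' X + n2' * l' X = 0) :=
  stmt_2_general V h hsymm l l2 P n n2 c1 c2 c3 c4 lam hlam v
end

section
/- With hypersurface data as above, let v ∈ V and define W = l(v) and Z = h(v,·) ∈ V*. Then W and Z satisfy the constraint n2·W + Z(n) = 0, and v decomposes as v = W·n + P(Z,·)♯, i.e. ω(v) = W·ω(n) + P(Z,ω) for all covectors ω. -/
theorem stmt_3_general
    (V : Type*) [AddCommGroup V] [Module ℝ V]
    (h : V →ₗ[ℝ] V →ₗ[ℝ] ℝ) (hsymm : ∀ X Y : V, h X Y = h Y X)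
    (l : Module.Dual ℝ V)
    (P : Module.Dual ℝ V →ₗ[ℝ] Module.Dual ℝ V →ₗ[ℝ] ℝ)
    (Psymm : ∀ ω χ : Module.Dual ℝ V, P ω χ = P χ ω)
    (n : V) (n2 : ℝ)
    (c1 : ∀ (ω : Module.Dual ℝ V) (X : V), P ω (h X) + ω n * l X = ω X)
    (c4 : ∀ X : V, h n X + n2 * l X = 0)
    (v : V) :
    let W : ℝ := l v
    let Z : Module.Dual ℝ V := h v
    n2 * W + Z n = 0 ∧ ∀ ω : Module.Dual ℝ V, ω v = W * ω n + P Z ω := by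
  intro W Z
  refine ⟨?_, fun ω => ?_⟩
  · have hconstraint := c4 v
    rw [hsymm n v] at hconstraint
    linarith
  · have hreconstruct := c1 ω v
    rw [Psymm] at hreconstruct
    linarith

/-- Decomposition of a tangent gauge vector v in terms of W = l(v) and Z = h(v,·):
the constraint n2·W + Z(n) = 0 holds and v = W·n + P(Z,·)♯. -/
theorem stmt_3
    (V : Type*) [AddCommGroup V] [Module ℝ V] [FiniteDimensional ℝ V]
    (h : V →ₗ[ℝ] V →ₗ[ℝ] ℝ) (hsymm : ∀ X Y : V, h X Y = h Y X)
    (l : Module.Dual ℝ V) (l2 : ℝ)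
    (P : Module.Dual ℝ V →ₗ[ℝ] Module.Dual ℝ V →ₗ[ℝ] ℝ)
    (Psymm : ∀ ω χ : Module.Dual ℝ V, P ω χ = P χ ω)
    (n : V) (n2 : ℝ)
    (c1 : ∀ (ω : Module.Dual ℝ V) (X : V), P ω (h X) + ω n * l X = ω X)
    (c2 : ∀ ω : Module.Dual ℝ V, P ω l + l2 * ω n = 0)
    (c3 : l n + n2 * l2 = 1)
    (c4 : ∀ X : V, h n X + n2 * l X = 0)
    (v : V) :
    let W : ℝ := l v
    let Z : Module.Dual ℝ V := h v
    n2 * W + Z n = 0 ∧ ∀ ω : Module.Dual ℝ V, ω v = W * ω n + P Z ω :=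
  stmt_3_general V h hsymm l P Psymm n n2 c1 c4 v
end

section
/- Under a rigging transformation with background gauge fields λ ≠ 0, W ∈ ℝ, Z ∈ V* satisfying n2·W + Z(n) = 0 (determining v = W·n + P(Z,·)♯), the transformed rigging data satisfies l' = λ(l + Z) and l2' = λ²( l2 + 2W + P(Z,Z) − n2·W² ). -/
/-!
The gauge vector `v = W • n + P(Z,·)♯` is built so that `h(v, ·) = Z` and `l(v) = W`: pairing the
compatibility relations with `Z` produces every term except a multiple of `n2 * W + Z n`, which
the gauge condition kills. Substituting these two identities (and `h(v, v) = Z v`) gives both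
transformation laws.
-/

section RiggingGauge

variable {V : Type*} [AddCommGroup V] [Module ℝ V]
  {h : V →ₗ[ℝ] V →ₗ[ℝ] ℝ} {l : Module.Dual ℝ V} {l2 : ℝ}
  {P : Module.Dual ℝ V →ₗ[ℝ] Module.Dual ℝ V →ₗ[ℝ] ℝ} {n : V} {n2 W : ℝ}
  {Z : Module.Dual ℝ V} {vP : V}

lemma dual_apply_smul_add_sharp (hvP : ∀ ω : Module.Dual ℝ V, ω vP = P Z ω)
    (ω : Module.Dual ℝ V) : ω (W • n + vP) = W * ω n + P Z ω := by
  rw [map_add, map_smul, hvP, smul_eq_mul]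

lemma bilin_smul_add_sharp_eq (hsymm : ∀ X Y : V, h X Y = h Y X)
    (c1 : ∀ (ω : Module.Dual ℝ V) (X : V), P ω (h X) + ω n * l X = ω X)
    (c4 : ∀ X : V, h n X + n2 * l X = 0) (hc : n2 * W + Z n = 0)
    (hvP : ∀ ω : Module.Dual ℝ V, ω vP = P Z ω) :
    h (W • n + vP) = Z := by
  ext X
  have hsharp : h (W • n + vP) X = W * h n X + P Z (h X) := by
    rw [hsymm, dual_apply_smul_add_sharp hvP, hsymm]
  rw [hsharp]
  linear_combination c1 Z X + W * c4 X - l X * hc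

lemma rigging_smul_add_sharp_eq (c2 : ∀ ω : Module.Dual ℝ V, P ω l + l2 * ω n = 0)
    (c3 : l n + n2 * l2 = 1) (hc : n2 * W + Z n = 0)
    (hvP : ∀ ω : Module.Dual ℝ V, ω vP = P Z ω) :
    l (W • n + vP) = W := by
  rw [dual_apply_smul_add_sharp hvP]
  linear_combination W * c3 + c2 Z - l2 * hc

end RiggingGauge

theorem stmt_4_general
    (V : Type*) [AddCommGroup V] [Module ℝ V]
    (h : V →ₗ[ℝ] V →ₗ[ℝ] ℝ) (hsymm : ∀ X Y : V, h X Y = h Y X)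
    (l : Module.Dual ℝ V) (l2 : ℝ)
    (P : Module.Dual ℝ V →ₗ[ℝ] Module.Dual ℝ V →ₗ[ℝ] ℝ)
    (n : V) (n2 : ℝ)
    (c1 : ∀ (ω : Module.Dual ℝ V) (X : V), P ω (h X) + ω n * l X = ω X)
    (c2 : ∀ ω : Module.Dual ℝ V, P ω l + l2 * ω n = 0)
    (c3 : l n + n2 * l2 = 1)
    (c4 : ∀ X : V, h n X + n2 * l X = 0)
    (lam : ℝ) (W : ℝ) (Z : Module.Dual ℝ V)
    (hc : n2 * W + Z n = 0)
    (vP : V) (hvP : ∀ ω : Module.Dual ℝ V, ω vP = P Z ω) :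
    let v : V := W • n + vP
    (lam • (l + h v) = lam • (l + Z)) ∧
    (lam ^ 2 * (l2 + 2 * l v + h v v)
      = lam ^ 2 * (l2 + 2 * W + P Z Z - n2 * W ^ 2)) := by
  intro v
  have hv : h v = Z := bilin_smul_add_sharp_eq hsymm c1 c4 hc hvP
  have hlv : l v = W := rigging_smul_add_sharp_eq c2 c3 hc hvP
  refine ⟨by rw [hv], ?_⟩
  rw [hlv, hv, dual_apply_smul_add_sharp hvP]
  linear_combination lam ^ 2 * W * hc

/-- Rigging transformation encoded by gauge fields (λ, W, Z) with n2·W + Z(n) = 0 and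
v = W·n + P(Z,·)♯: the transformed rigging data is l' = λ(l + Z) and
l2' = λ²(l2 + 2W + P(Z,Z) − n2·W²). -/
theorem stmt_4
    (V : Type*) [AddCommGroup V] [Module ℝ V] [FiniteDimensional ℝ V]
    (h : V →ₗ[ℝ] V →ₗ[ℝ] ℝ) (hsymm : ∀ X Y : V, h X Y = h Y X)
    (l : Module.Dual ℝ V) (l2 : ℝ)
    (P : Module.Dual ℝ V →ₗ[ℝ] Module.Dual ℝ V →ₗ[ℝ] ℝ)
    (Psymm : ∀ ω χ : Module.Dual ℝ V, P ω χ = P χ ω)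
    (n : V) (n2 : ℝ)
    (c1 : ∀ (ω : Module.Dual ℝ V) (X : V), P ω (h X) + ω n * l X = ω X)
    (c2 : ∀ ω : Module.Dual ℝ V, P ω l + l2 * ω n = 0)
    (c3 : l n + n2 * l2 = 1)
    (c4 : ∀ X : V, h n X + n2 * l X = 0)
    (lam : ℝ) (hlam : lam ≠ 0) (W : ℝ) (Z : Module.Dual ℝ V)
    (hc : n2 * W + Z n = 0)
    (vP : V) (hvP : ∀ ω : Module.Dual ℝ V, ω vP = P Z ω) :
    let v : V := W • n + vP
    (lam • (l + h v) = lam • (l + Z)) ∧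
    (lam ^ 2 * (l2 + 2 * l v + h v v)
      = lam ^ 2 * (l2 + 2 * W + P Z Z - n2 * W ^ 2)) :=
  stmt_4_general V h hsymm l l2 P n n2 c1 c2 c3 c4 lam W Z hc vP hvP
end

section
/- Consider a first-order ('pure linearized') rigging transformation with background gauge fields λ = 1, W = 0, Z = 0 and first-order gauge fields δλ ∈ ℝ, δW ∈ ℝ, δZ ∈ V* satisfying n2·δW + δZ(n) = 0. The transformed first-order rigging data is δl' = δl + δλ·l + δZ and δl2' = δl2 + 2 l2·δλ + 2 δW. Writing Δδl = δl' − δl and Δδl2 = δl2' − δl2, the map (δλ, δW, δZ) ↦ (Δδl, Δδl2) is invertible, with inverse δλ = (n2/2)·Δδl2 + Δδl(n), δW = (1/2)(1 − n2·l2)·Δδl2 − l2·Δδl(n), and δZ = Δδl − Δδl(n)·l − (n2/2)·Δδl2·l. -/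
/-! Evaluating `Δδl = δλ • l + δZ` on `n` and using `l n = 1 - n2 * l2` together with the gauge
constraint `δZ n = -n2 * δW` gives `Δδl n = δλ * (1 - n2 * l2) - n2 * δW`, from which `δλ` is read
off. Once `δλ` is known, `δW = Δδl2 / 2 - l2 * δλ` and `δZ = Δδl - δλ • l` are immediate. -/

theorem gauge_dlam_eq {V : Type*} [AddCommGroup V] [Module ℝ V] {l : Module.Dual ℝ V}
    {n : V} {l2 n2 : ℝ} (hln : l n + n2 * l2 = 1) {dlam dW : ℝ} {dZ : Module.Dual ℝ V}
    (hc : n2 * dW + dZ n = 0) :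
    dlam = n2 / 2 * (2 * l2 * dlam + 2 * dW) + (dlam • l + dZ) n := by
  rw [LinearMap.add_apply, LinearMap.smul_apply, smul_eq_mul]
  linear_combination (-dlam) * hln - hc

theorem stmt_5_general
    (V : Type*) [AddCommGroup V] [Module ℝ V]
    (l : Module.Dual ℝ V) (l2 : ℝ)
    (n : V) (n2 : ℝ)
    (c3 : l n + n2 * l2 = 1)
    (dlam dW : ℝ) (dZ : Module.Dual ℝ V)
    (hc : n2 * dW + dZ n = 0) :
    let Δδl : Module.Dual ℝ V := dlam • l + dZ
    let Δδl2 : ℝ := 2 * l2 * dlam + 2 * dW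
    (dlam = n2 / 2 * Δδl2 + Δδl n) ∧
    (dW = 1 / 2 * (1 - n2 * l2) * Δδl2 - l2 * Δδl n) ∧
    (dZ = Δδl - Δδl n • l - (n2 / 2 * Δδl2) • l) := by
  intro Δδl Δδl2
  have hdlam : dlam = n2 / 2 * Δδl2 + Δδl n := gauge_dlam_eq c3 hc
  refine ⟨hdlam, ?_, ?_⟩
  · linear_combination (-l2) * hdlam
  · rw [sub_sub, ← add_smul, add_comm, ← hdlam]
    exact (add_sub_cancel_left _ _).symm

/-- Gauge inversion to first order (Prop. 5.8 of Nolan–Reina–Sousa): for a pure first-order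
rigging transformation (background λ = 1, W = 0, Z = 0) with first-order gauge fields
(dlam = δλ, dW = δW, dZ = δZ) constrained by n2·δW + δZ(n) = 0, the map
(δλ, δW, δZ) ↦ (Δδl, Δδl2), Δδl = δλ·l + δZ, Δδl2 = 2 l2 δλ + 2 δW,
is inverted by the stated formulas. -/
theorem stmt_5
    (V : Type*) [AddCommGroup V] [Module ℝ V] [FiniteDimensional ℝ V]
    (h : V →ₗ[ℝ] V →ₗ[ℝ] ℝ) (hsymm : ∀ X Y : V, h X Y = h Y X)
    (l : Module.Dual ℝ V) (l2 : ℝ)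
    (P : Module.Dual ℝ V →ₗ[ℝ] Module.Dual ℝ V →ₗ[ℝ] ℝ)
    (Psymm : ∀ ω χ : Module.Dual ℝ V, P ω χ = P χ ω)
    (n : V) (n2 : ℝ)
    (c1 : ∀ (ω : Module.Dual ℝ V) (X : V), P ω (h X) + ω n * l X = ω X)
    (c2 : ∀ ω : Module.Dual ℝ V, P ω l + l2 * ω n = 0)
    (c3 : l n + n2 * l2 = 1)
    (c4 : ∀ X : V, h n X + n2 * l X = 0)
    (dlam dW : ℝ) (dZ : Module.Dual ℝ V)
    (hc : n2 * dW + dZ n = 0) :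
    let Δδl : Module.Dual ℝ V := dlam • l + dZ
    let Δδl2 : ℝ := 2 * l2 * dlam + 2 * dW
    (dlam = n2 / 2 * Δδl2 + Δδl n) ∧
    (dW = 1 / 2 * (1 - n2 * l2) * Δδl2 - l2 * Δδl n) ∧
    (dZ = Δδl - Δδl n • l - (n2 / 2 * Δδl2) • l) :=
  stmt_5_general V l l2 n n2 c3 dlam dW dZ hc
end

section
/- In the setting of the preceding gauge-inversion statement, for any δl ∈ V* and δl2 ∈ ℝ there exists a unique choice of first-order gauge fields (δλ, δW, δZ) with n2·δW + δZ(n) = 0 such that the transformed perturbations vanish: δl' = 0 and δl2' = 0. -/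
/-!
The three equations are linear in `(δλ, δW, δZ)`. The last two determine `δZ` and `δW` in terms of
`δλ`; substituting them into the constraint leaves `δλ (l(n) + n2 l2) = -(δl(n) + n2 δl2 / 2)`,
and the compatibility relation `l(n) + n2 l2 = 1` makes this solvable for `δλ`, with no condition
on the sign of `n2`.
-/

namespace RiggingGauge

variable {K V : Type*} [Field K] [CharZero K] [AddCommGroup V] [Module K V]

def cancellingGauge (l : Module.Dual K V) (l2 : K) (n : V) (n2 : K)
    (δl : Module.Dual K V) (δl2 : K) : K × K × Module.Dual K V :=
  let δlam := -(δl n + n2 * δl2 / 2)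
  (δlam, -(δl2 / 2 + l2 * δlam), -(δl + δlam • l))

theorem gauge_equations_iff_eq_cancellingGauge {l : Module.Dual K V} {l2 : K} {n : V} {n2 : K}
    (hln : l n + n2 * l2 = 1) (δl : Module.Dual K V) (δl2 : K) (p : K × K × Module.Dual K V) :
    ((n2 * p.2.1 + p.2.2 n = 0) ∧ (δl + p.1 • l + p.2.2 = 0) ∧
      (δl2 + 2 * l2 * p.1 + 2 * p.2.1 = 0)) ↔ p = cancellingGauge l l2 n n2 δl δl2 := by
  obtain ⟨δlam, δW, δZ⟩ := p
  simp only [cancellingGauge, Prod.mk.injEq]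
  constructor
  · rintro ⟨hconstr, hl, hl2⟩
    have hδZ : δZ = -(δl + δlam • l) := eq_neg_of_add_eq_zero_right hl
    have hδW : δW = -(δl2 / 2 + l2 * δlam) := by linear_combination hl2 / 2
    have hδlam : δlam = -(δl n + n2 * δl2 / 2) := by
      rw [hδZ, hδW] at hconstr
      simp only [LinearMap.neg_apply, LinearMap.add_apply, LinearMap.smul_apply,
        smul_eq_mul] at hconstr
      linear_combination -hconstr - δlam * hln
    subst hδlam
    exact ⟨rfl, hδW, hδZ⟩
  · rintro ⟨rfl, rfl, rfl⟩
    refine ⟨?_, by abel, by ring⟩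
    simp only [LinearMap.neg_apply, LinearMap.add_apply, LinearMap.smul_apply, smul_eq_mul]
    linear_combination (δl n + n2 * δl2 / 2) * hln

end RiggingGauge

open RiggingGauge in
theorem stmt_6_general
    (V : Type*) [AddCommGroup V] [Module ℝ V]
    (l : Module.Dual ℝ V) (l2 : ℝ)
    (n : V) (n2 : ℝ)
    (c3 : l n + n2 * l2 = 1)
    (δl : Module.Dual ℝ V) (δl2 : ℝ) :
    ∃! p : ℝ × ℝ × Module.Dual ℝ V,
      (n2 * p.2.1 + p.2.2 n = 0) ∧
      (δl + p.1 • l + p.2.2 = 0) ∧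
      (δl2 + 2 * l2 * p.1 + 2 * p.2.1 = 0) :=
  ⟨cancellingGauge l l2 n n2 δl δl2,
    (gauge_equations_iff_eq_cancellingGauge c3 δl δl2 _).2 rfl,
    fun p => (gauge_equations_iff_eq_cancellingGauge c3 δl δl2 p).1⟩

/-- The gauge δl' = δl2' = 0 can always be reached: for any first-order rigging
perturbations (δl, δl2) there exist unique constrained first-order gauge fields
(δλ, δW, δZ) with δl + δλ·l + δZ = 0 and δl2 + 2 l2 δλ + 2 δW = 0. -/
theorem stmt_6
    (V : Type*) [AddCommGroup V] [Module ℝ V] [FiniteDimensional ℝ V]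
    (h : V →ₗ[ℝ] V →ₗ[ℝ] ℝ) (hsymm : ∀ X Y : V, h X Y = h Y X)
    (l : Module.Dual ℝ V) (l2 : ℝ)
    (P : Module.Dual ℝ V →ₗ[ℝ] Module.Dual ℝ V →ₗ[ℝ] ℝ)
    (Psymm : ∀ ω χ : Module.Dual ℝ V, P ω χ = P χ ω)
    (n : V) (n2 : ℝ)
    (c1 : ∀ (ω : Module.Dual ℝ V) (X : V), P ω (h X) + ω n * l X = ω X)
    (c2 : ∀ ω : Module.Dual ℝ V, P ω l + l2 * ω n = 0)
    (c3 : l n + n2 * l2 = 1)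
    (c4 : ∀ X : V, h n X + n2 * l X = 0)
    (δl : Module.Dual ℝ V) (δl2 : ℝ) :
    ∃! p : ℝ × ℝ × Module.Dual ℝ V,
      (n2 * p.2.1 + p.2.2 n = 0) ∧
      (δl + p.1 • l + p.2.2 = 0) ∧
      (δl2 + 2 * l2 * p.1 + 2 * p.2.1 = 0) :=
  stmt_6_general V l l2 n n2 c3 δl δl2
end

section
/- Let the hypersurface data (h, l, l2) with inverse data (P, n, n2) be given at a NULL point, i.e. n2 = 0 (so l(n) = 1 and h(n,·) = 0). Suppose two rigging transformations with gauge data (λ±, W±, Z±) satisfying λ± ≠ 0 and n2·W± + Z±(n) = 0 both act on this same data, producing l'± = λ±(l + Z±) and l2'± = (λ±)²(l2 + 2W± + P(Z±,Z±)). Then l'⁺ = l'⁻ and l2'⁺ = l2'⁻ if and only if λ⁺ = λ⁻, W⁺ = W⁻ and Z⁺ = Z⁻. -/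
/-!
At a null point `l(n) = 1` and the gauge constraint becomes `Z±(n) = 0`, so evaluating
`l'± = λ±(l + Z±)` at `n` reads off `λ±`. With `λ⁺ = λ⁻ ≠ 0` cancelled, `l'⁺ = l'⁻` gives
`Z⁺ = Z⁻`; then the `P(Z, Z)` terms of `l2'±` coincide and cancelling `λ²` gives `W⁺ = W⁻`.
-/

section

variable {K M : Type*} [Field K] [AddCommGroup M] [Module K M]

theorem Module.Dual.smul_add_eq_smul_add_iff {l Z Z' : Module.Dual K M} {n : M}
    (hln : l n = 1) (hZ : Z n = 0) (hZ' : Z' n = 0) {a b : K} (hb : b ≠ 0) :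
    a • (l + Z) = b • (l + Z') ↔ a = b ∧ Z = Z' := by
  constructor
  · intro heq
    have hab : a = b := by
      simpa [hln, hZ, hZ'] using LinearMap.congr_fun heq n
    subst hab
    exact ⟨rfl, add_left_cancel (smul_right_injective _ hb heq)⟩
  · rintro ⟨rfl, rfl⟩
    rfl

end

theorem stmt_8_general
    (V : Type*) [AddCommGroup V] [Module ℝ V]
    (l : Module.Dual ℝ V) (l2 : ℝ)
    (P : Module.Dual ℝ V →ₗ[ℝ] Module.Dual ℝ V →ₗ[ℝ] ℝ)
    (n : V) (n2 : ℝ)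
    (c3 : l n + n2 * l2 = 1)
    (hnull : n2 = 0)
    (lamp lamm : ℝ) (hlm : lamm ≠ 0)
    (Wp Wm : ℝ) (Zp Zm : Module.Dual ℝ V)
    (hcp : n2 * Wp + Zp n = 0) (hcm : n2 * Wm + Zm n = 0) :
    ((lamp • (l + Zp) = lamm • (l + Zm)) ∧
      (lamp ^ 2 * (l2 + 2 * Wp + P Zp Zp) = lamm ^ 2 * (l2 + 2 * Wm + P Zm Zm)))
    ↔ (lamp = lamm ∧ Wp = Wm ∧ Zp = Zm) := by
  subst hnull
  have hln : l n = 1 := by simpa using c3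
  have hZp : Zp n = 0 := by simpa using hcp
  have hZm : Zm n = 0 := by simpa using hcm
  rw [Module.Dual.smul_add_eq_smul_add_iff hln hZp hZm hlm]
  constructor
  · rintro ⟨⟨rfl, rfl⟩, hl2⟩
    have := mul_left_cancel₀ (pow_ne_zero 2 hlm) hl2
    exact ⟨rfl, by linarith, rfl⟩
  · rintro ⟨rfl, rfl, rfl⟩
    exact ⟨⟨rfl, rfl⟩, rfl⟩

/-- Uniqueness of rigging gauge fields at a NULL point (n2 = 0): the transformed rigging
data from two gauge transformations agree iff the gauge fields agree. -/
theorem stmt_8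
    (V : Type*) [AddCommGroup V] [Module ℝ V] [FiniteDimensional ℝ V]
    (h : V →ₗ[ℝ] V →ₗ[ℝ] ℝ) (hsymm : ∀ X Y : V, h X Y = h Y X)
    (l : Module.Dual ℝ V) (l2 : ℝ)
    (P : Module.Dual ℝ V →ₗ[ℝ] Module.Dual ℝ V →ₗ[ℝ] ℝ)
    (Psymm : ∀ ω χ : Module.Dual ℝ V, P ω χ = P χ ω)
    (n : V) (n2 : ℝ)
    (c1 : ∀ (ω : Module.Dual ℝ V) (X : V), P ω (h X) + ω n * l X = ω X)
    (c2 : ∀ ω : Module.Dual ℝ V, P ω l + l2 * ω n = 0)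
    (c3 : l n + n2 * l2 = 1)
    (c4 : ∀ X : V, h n X + n2 * l X = 0)
    (hnull : n2 = 0)
    (lamp lamm : ℝ) (hlp : lamp ≠ 0) (hlm : lamm ≠ 0)
    (Wp Wm : ℝ) (Zp Zm : Module.Dual ℝ V)
    (hcp : n2 * Wp + Zp n = 0) (hcm : n2 * Wm + Zm n = 0) :
    ((lamp • (l + Zp) = lamm • (l + Zm)) ∧
      (lamp ^ 2 * (l2 + 2 * Wp + P Zp Zp) = lamm ^ 2 * (l2 + 2 * Wm + P Zm Zm)))
    ↔ (lamp = lamm ∧ Wp = Wm ∧ Zp = Zm) :=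
  stmt_8_general V l l2 P n n2 c3 hnull lamp lamm hlm Wp Wm Zp Zm hcp hcm
end

section
/- Let the hypersurface data (h, l, l2) with inverse data (P, n, n2) be given at a NON-NULL point, i.e. n2 ≠ 0. Suppose two rigging transformations with gauge data (λ±, W±, Z±), λ± ≠ 0, n2·W± + Z±(n) = 0, act on the same data, producing l'± = λ±(l + Z±) and l2'± = (λ±)²(l2 + 2W± + P(Z±,Z±) − n2·(W±)²). If l'⁺ = l'⁻, l2'⁺ = l2'⁻, and additionally λ⁺ and λ⁻ have the same sign (orientation compatibility), then λ⁺ = λ⁻, W⁺ = W⁻ and Z⁺ = Z⁻. -/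
/-!
Contracting `l' = λ (l + Z)` with `n`, and using `P(·, l) = -l2 · (·)(n)`, `l(n) = 1 - n2 l2` and
the gauge condition `Z(n) = -n2 W`, one finds the gauge-invariant expression
`λ² = n2 (l2' - P(l', l')) + l'(n)²`. Hence `λ⁺² = λ⁻²`, and equal signs give `λ⁺ = λ⁻`;
then `Z⁺ = Z⁻` follows from `l'⁺ = l'⁻`, and `W⁺ = W⁻` from the gauge condition since `n2 ≠ 0`.
-/

theorem eq_of_sq_eq_sq_of_mul_pos {R : Type*} [CommRing R] [LinearOrder R] [IsStrictOrderedRing R]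
    {a b : R} (hsq : a ^ 2 = b ^ 2) (hab : 0 < a * b) : a = b := by
  rcases eq_or_eq_neg_of_sq_eq_sq a b hsq with h | rfl
  · exact h
  · nlinarith [sq_nonneg b]

theorem gauge_sq_eq {R V : Type*} [CommRing R] [AddCommGroup V] [Module R V]
    {P : Module.Dual R V →ₗ[R] Module.Dual R V →ₗ[R] R} {l : Module.Dual R V} {l2 n2 : R} {n : V}
    (Psymm : ∀ ω χ : Module.Dual R V, P ω χ = P χ ω)
    (c2 : ∀ ω : Module.Dual R V, P ω l + l2 * ω n = 0) (c3 : l n + n2 * l2 = 1)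
    (lam W : R) (Z : Module.Dual R V) (hc : n2 * W + Z n = 0) :
    lam ^ 2 = n2 * (lam ^ 2 * (l2 + 2 * W + P Z Z - n2 * W ^ 2)
      - P (lam • (l + Z)) (lam • (l + Z))) + ((lam • (l + Z)) n) ^ 2 := by
  have hP : ∀ ω, P ω l = -(l2 * ω n) := fun ω => eq_neg_of_add_eq_zero_left (c2 ω)
  have hln : l n = 1 - n2 * l2 := eq_sub_of_add_eq c3
  have hZn : Z n = -(n2 * W) := eq_neg_of_add_eq_zero_right hc
  simp only [map_smul, map_add, LinearMap.smul_apply, LinearMap.add_apply, smul_eq_mul]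
  rw [Psymm l Z, hP l, hP Z, hln, hZn]
  ring

theorem stmt_9_general
    (V : Type*) [AddCommGroup V] [Module ℝ V]
    (l : Module.Dual ℝ V) (l2 : ℝ)
    (P : Module.Dual ℝ V →ₗ[ℝ] Module.Dual ℝ V →ₗ[ℝ] ℝ)
    (Psymm : ∀ ω χ : Module.Dual ℝ V, P ω χ = P χ ω)
    (n : V) (n2 : ℝ)
    (c2 : ∀ ω : Module.Dual ℝ V, P ω l + l2 * ω n = 0)
    (c3 : l n + n2 * l2 = 1)
    (hnn : n2 ≠ 0)
    (lamp lamm : ℝ) (hlp : lamp ≠ 0)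
    (Wp Wm : ℝ) (Zp Zm : Module.Dual ℝ V)
    (hcp : n2 * Wp + Zp n = 0) (hcm : n2 * Wm + Zm n = 0)
    (hl' : lamp • (l + Zp) = lamm • (l + Zm))
    (hl2' : lamp ^ 2 * (l2 + 2 * Wp + P Zp Zp - n2 * Wp ^ 2)
      = lamm ^ 2 * (l2 + 2 * Wm + P Zm Zm - n2 * Wm ^ 2))
    (horient : 0 < lamp * lamm) :
    lamp = lamm ∧ Wp = Wm ∧ Zp = Zm := by
  have hsq : lamp ^ 2 = lamm ^ 2 := by
    rw [gauge_sq_eq Psymm c2 c3 lamp Wp Zp hcp, gauge_sq_eq Psymm c2 c3 lamm Wm Zm hcm, hl', hl2']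
  obtain rfl : lamp = lamm := eq_of_sq_eq_sq_of_mul_pos hsq horient
  obtain rfl : Zp = Zm := add_left_cancel (smul_right_injective _ hlp hl')
  exact ⟨rfl, mul_left_cancel₀ hnn (by linear_combination hcp - hcm), rfl⟩

/-- Uniqueness of rigging gauge fields at a NON-NULL point (n2 ≠ 0), given orientation
compatibility (λ⁺ and λ⁻ of the same sign): compatibility of the transformed rigging
data forces the gauge fields to agree. -/
theorem stmt_9
    (V : Type*) [AddCommGroup V] [Module ℝ V] [FiniteDimensional ℝ V]
    (h : V →ₗ[ℝ] V →ₗ[ℝ] ℝ) (hsymm : ∀ X Y : V, h X Y = h Y X)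
    (l : Module.Dual ℝ V) (l2 : ℝ)
    (P : Module.Dual ℝ V →ₗ[ℝ] Module.Dual ℝ V →ₗ[ℝ] ℝ)
    (Psymm : ∀ ω χ : Module.Dual ℝ V, P ω χ = P χ ω)
    (n : V) (n2 : ℝ)
    (c1 : ∀ (ω : Module.Dual ℝ V) (X : V), P ω (h X) + ω n * l X = ω X)
    (c2 : ∀ ω : Module.Dual ℝ V, P ω l + l2 * ω n = 0)
    (c3 : l n + n2 * l2 = 1)
    (c4 : ∀ X : V, h n X + n2 * l X = 0)
    (hnn : n2 ≠ 0)
    (lamp lamm : ℝ) (hlp : lamp ≠ 0) (hlm : lamm ≠ 0)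
    (Wp Wm : ℝ) (Zp Zm : Module.Dual ℝ V)
    (hcp : n2 * Wp + Zp n = 0) (hcm : n2 * Wm + Zm n = 0)
    (hl' : lamp • (l + Zp) = lamm • (l + Zm))
    (hl2' : lamp ^ 2 * (l2 + 2 * Wp + P Zp Zp - n2 * Wp ^ 2)
      = lamm ^ 2 * (l2 + 2 * Wm + P Zm Zm - n2 * Wm ^ 2))
    (horient : 0 < lamp * lamm) :
    lamp = lamm ∧ Wp = Wm ∧ Zp = Zm :=
  stmt_9_general V l l2 P Psymm n n2 c2 c3 hnn lamp lamm hlp Wp Wm Zp Zm hcp hcm hl' hl2' horient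
end

section
/- Let the first-order gauge-transformed rigging perturbations be δl' = δλ·(l + Z) + λ·(δl + δZ + δh(v,·)) and δl2' = 2λδλ·(l2 + 2W + Z(v)) + λ²·(δl2 + 2δW + 2δZ(v) + 2δl(v) + δh(v,v)), where v = W·n + P(Z,·)♯, and suppose background gauge fields agree on both sides: [λ] = [W] = [Z] = 0 (λ ≠ 0), as do the background data and the unprimed perturbations: [h] = [l] = [l2] = 0, [δh] = [δl] = [δl2] = 0. Then [δl'] = 0 and [δl2'] = 0 if and only if [δλ] = 0, [δW] = 0 and [δZ] = 0, where the first-order gauge fields satisfy n2·δW± + δZ±(n) = 0. -/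
/-!
Subtracting the two sides, the jumps `a = [δλ]`, `b = [δW]`, `ζ = [δZ]` satisfy
`a (l + Z) + λ ζ = 0` and `a (l2 + 2W + Z(v)) + λ (b + ζ(v)) = 0`. Evaluating the first at `v`
(where `l(v) = W`) and subtracting from the second gives `a (l2 + W) + λ b = 0`; evaluating
the first at `n` and using `n2 b + ζ(n) = 0` and `l(n) + n2 l2 = 1` then forces `a = 0`,
so `b = 0` and `ζ = 0` because `λ ≠ 0`. No case split on `n2` is needed.
-/

section

open Module

variable {V : Type*} [AddCommGroup V] [Module ℝ V]

theorem rigging_apply_gaugeVector_eq {P : Dual ℝ V →ₗ[ℝ] Dual ℝ V →ₗ[ℝ] ℝ}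
    {l Z : Dual ℝ V} {n v : V} {l2 n2 W : ℝ} (c2 : ∀ ω : Dual ℝ V, P ω l + l2 * ω n = 0)
    (c3 : l n + n2 * l2 = 1) (hc : n2 * W + Z n = 0)
    (hv : ∀ ω : Dual ℝ V, ω v = W * ω n + P Z ω) : l v = W := by
  linear_combination hv l + c2 Z + W * c3 - l2 * hc

theorem gauge_jumps_eq_zero {l Z ζ : Dual ℝ V} {n v : V} {l2 n2 W lam a b : ℝ}
    (hlam : lam ≠ 0) (hlv : l v = W) (c3 : l n + n2 * l2 = 1) (hc : n2 * W + Z n = 0)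
    (hζ : n2 * b + ζ n = 0) (h1 : a • (l + Z) + lam • ζ = 0)
    (h2 : a * (l2 + 2 * W + Z v) + lam * (b + ζ v) = 0) : a = 0 ∧ b = 0 ∧ ζ = 0 := by
  have h1_apply (X : V) : a * (l X + Z X) + lam * ζ X = 0 := by
    simpa [mul_add] using LinearMap.congr_fun h1 X
  have key : a * (l2 + W) + lam * b = 0 := by
    linear_combination h2 - h1_apply v + a * hlv
  have ha : a = 0 := by
    linear_combination h1_apply n + n2 * key - lam * hζ - a * c3 - a * hc
  have hb : b = 0 :=
    mul_left_cancel₀ hlam (by linear_combination key - (l2 + W) * ha)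
  rw [ha, zero_smul, zero_add] at h1
  exact ⟨ha, hb, (smul_eq_zero.mp h1).resolve_left hlam⟩

end

theorem stmt_10_general
    (V : Type*) [AddCommGroup V] [Module ℝ V]
    (l : Module.Dual ℝ V) (l2 : ℝ)
    (P : Module.Dual ℝ V →ₗ[ℝ] Module.Dual ℝ V →ₗ[ℝ] ℝ)
    (n : V) (n2 : ℝ)
    (c2 : ∀ ω : Module.Dual ℝ V, P ω l + l2 * ω n = 0)
    (c3 : l n + n2 * l2 = 1)
    -- shared background gauge fields (the jumps [λ], [W], [Z] vanish):
    (lam : ℝ) (hlam : lam ≠ 0) (W : ℝ) (Z : Module.Dual ℝ V)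
    (hc : n2 * W + Z n = 0)
    (v : V) (hv : ∀ ω : Module.Dual ℝ V, ω v = W * ω n + P Z ω)
    -- shared (unjumped) first-order perturbations of the data:
    (δh : V →ₗ[ℝ] V →ₗ[ℝ] ℝ)
    (δl : Module.Dual ℝ V) (δl2 : ℝ)
    -- first-order gauge fields on the two sides:
    (dlamp dlamm dWp dWm : ℝ) (dZp dZm : Module.Dual ℝ V)
    (hcp : n2 * dWp + dZp n = 0) (hcm : n2 * dWm + dZm n = 0) :
    ((dlamp • (l + Z) + lam • (δl + dZp + δh v)
        = dlamm • (l + Z) + lam • (δl + dZm + δh v)) ∧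
      (2 * lam * dlamp * (l2 + 2 * W + Z v)
          + lam ^ 2 * (δl2 + 2 * dWp + 2 * dZp v + 2 * δl v + δh v v)
        = 2 * lam * dlamm * (l2 + 2 * W + Z v)
          + lam ^ 2 * (δl2 + 2 * dWm + 2 * dZm v + 2 * δl v + δh v v)))
    ↔ (dlamp = dlamm ∧ dWp = dWm ∧ dZp = dZm) := by
  constructor
  · rintro ⟨e1, e2⟩
    have hζ : n2 * (dWp - dWm) + (dZp - dZm) n = 0 := by
      rw [LinearMap.sub_apply]
      linear_combination hcp - hcm
    have h1 : (dlamp - dlamm) • (l + Z) + lam • (dZp - dZm) = 0 := by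
      linear_combination (norm := module) e1
    have h2 : (dlamp - dlamm) * (l2 + 2 * W + Z v) + lam * ((dWp - dWm) + (dZp - dZm) v) = 0 := by
      refine mul_left_cancel₀ (mul_ne_zero two_ne_zero hlam) ?_
      rw [LinearMap.sub_apply]
      linear_combination e2
    obtain ⟨ha, hb, hdZ⟩ := gauge_jumps_eq_zero hlam
      (rigging_apply_gaugeVector_eq c2 c3 hc hv) c3 hc hζ h1 h2
    exact ⟨sub_eq_zero.mp ha, sub_eq_zero.mp hb, sub_eq_zero.mp hdZ⟩
  · rintro ⟨rfl, rfl, rfl⟩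
    exact ⟨rfl, rfl⟩

/-- Rigging independence of the matching conditions to first order (Prop. 6.5, pointwise):
with shared background data, background gauge fields and unprimed perturbations, the gauge
transformed first-order rigging perturbations from the two sides agree iff the first-order
gauge fields agree. -/
theorem stmt_10
    (V : Type*) [AddCommGroup V] [Module ℝ V] [FiniteDimensional ℝ V]
    (h : V →ₗ[ℝ] V →ₗ[ℝ] ℝ) (hsymm : ∀ X Y : V, h X Y = h Y X)
    (l : Module.Dual ℝ V) (l2 : ℝ)
    (P : Module.Dual ℝ V →ₗ[ℝ] Module.Dual ℝ V →ₗ[ℝ] ℝ)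
    (Psymm : ∀ ω χ : Module.Dual ℝ V, P ω χ = P χ ω)
    (n : V) (n2 : ℝ)
    (c1 : ∀ (ω : Module.Dual ℝ V) (X : V), P ω (h X) + ω n * l X = ω X)
    (c2 : ∀ ω : Module.Dual ℝ V, P ω l + l2 * ω n = 0)
    (c3 : l n + n2 * l2 = 1)
    (c4 : ∀ X : V, h n X + n2 * l X = 0)
    -- shared background gauge fields (the jumps [λ], [W], [Z] vanish):
    (lam : ℝ) (hlam : lam ≠ 0) (W : ℝ) (Z : Module.Dual ℝ V)
    (hc : n2 * W + Z n = 0)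
    (v : V) (hv : ∀ ω : Module.Dual ℝ V, ω v = W * ω n + P Z ω)
    -- shared (unjumped) first-order perturbations of the data:
    (δh : V →ₗ[ℝ] V →ₗ[ℝ] ℝ) (δhsymm : ∀ X Y : V, δh X Y = δh Y X)
    (δl : Module.Dual ℝ V) (δl2 : ℝ)
    -- first-order gauge fields on the two sides:
    (dlamp dlamm dWp dWm : ℝ) (dZp dZm : Module.Dual ℝ V)
    (hcp : n2 * dWp + dZp n = 0) (hcm : n2 * dWm + dZm n = 0) :
    ((dlamp • (l + Z) + lam • (δl + dZp + δh v)
        = dlamm • (l + Z) + lam • (δl + dZm + δh v)) ∧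
      (2 * lam * dlamp * (l2 + 2 * W + Z v)
          + lam ^ 2 * (δl2 + 2 * dWp + 2 * dZp v + 2 * δl v + δh v v)
        = 2 * lam * dlamm * (l2 + 2 * W + Z v)
          + lam ^ 2 * (δl2 + 2 * dWm + 2 * dZm v + 2 * δl v + δh v v)))
    ↔ (dlamp = dlamm ∧ dWp = dWm ∧ dZp = dZm) :=
  stmt_10_general V l l2 P n n2 c2 c3 lam hlam W Z hc v hv δh δl δl2 dlamp dlamm dWp dWm dZp dZm hcp
    hcm
end

section
/- Given hypersurface data (h, l, l2) with inverse data (P, n, n2), and first-order perturbations δh (symmetric bilinear form), δl (covector), δl2 (scalar), define δP(ω,χ) = −(P⊗P applied to δh) − terms: explicitly, δP(ω,χ) = −δh(P(ω,·)♯, P(χ,·)♯) − ω(n)·P(χ, δl) − χ(n)·P(ω, δl) − ω(n)χ(n)·δl2; δn ∈ V by ω(δn) = −δh(n, P(ω,·)♯) − n2·ω(n)·δl2 − n2·P(ω, δl) − ω(n)·δl(n); and δn2 = −δh(n,n) − n2·(n2·δl2 + 2·δl(n)). Then these satisfy the linearized compatibility relations: (a) P(ω, δh(X,·)) + δP(ω,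 h(X,·)) + ω(δn)·l(X) + ω(n)·δl(X) = 0; (b) δP(ω, l) + P(ω, δl) + δl2·ω(n) + l2·ω(δn) = 0; (c) δl(n) + l(δn) + δn2·l2 + n2·δl2 = 0; (d) δh(n, X) + h(δn, X) + δn2·l(X) + n2·δl(X) = 0, for all ω ∈ V*, X ∈ V. -/
/-!
Read through covectors, the compatibility relations `c1` and `c2` (with the symmetry of `P`)
say that `♯` sends `h(X,·)` to `X - l(X) n` and `l` to `-l2 n`. Substituting this, together
with the formula for `δn`, into `δP` and `δn2` turns each linearized relation into a
polynomial identity that follows from `c3` or `c4`.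
-/

open Module

namespace HypersurfaceData

variable {K V : Type*} [CommRing K] [AddCommGroup V] [Module K V]
  {h : V →ₗ[K] V →ₗ[K] K} {l : Dual K V} {l2 : K}
  {P : Dual K V →ₗ[K] Dual K V →ₗ[K] K} {n : V} {n2 : K} {sharp : Dual K V → V}

theorem apply_sharp_h (hsharp : ∀ ω χ : Dual K V, χ (sharp ω) = P ω χ)
    (Psymm : ∀ ω χ : Dual K V, P ω χ = P χ ω)
    (c1 : ∀ (ω : Dual K V) (X : V), P ω (h X) + ω n * l X = ω X) (χ : Dual K V) (X : V) :
    χ (sharp (h X)) = χ X - l X * χ n := by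
  rw [hsharp, Psymm]
  linear_combination c1 χ X

theorem apply_sharp_l (hsharp : ∀ ω χ : Dual K V, χ (sharp ω) = P ω χ)
    (Psymm : ∀ ω χ : Dual K V, P ω χ = P χ ω)
    (c2 : ∀ ω : Dual K V, P ω l + l2 * ω n = 0) (χ : Dual K V) :
    χ (sharp l) = -(l2 * χ n) := by
  rw [hsharp, Psymm]
  linear_combination c2 χ

variable {δh : V →ₗ[K] V →ₗ[K] K} {δl : Dual K V} {δl2 : K} {δn : V}

theorem linearized_P_h_relation (hsymm : ∀ X Y : V, h X Y = h Y X)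
    (hsharp : ∀ ω χ : Dual K V, χ (sharp ω) = P ω χ)
    (Psymm : ∀ ω χ : Dual K V, P ω χ = P χ ω)
    (c1 : ∀ (ω : Dual K V) (X : V), P ω (h X) + ω n * l X = ω X)
    (c4 : ∀ X : V, h n X + n2 * l X = 0)
    (δhsymm : ∀ X Y : V, δh X Y = δh Y X)
    (hδn : ∀ ω : Dual K V,
      ω δn = -δh n (sharp ω) - n2 * ω n * δl2 - n2 * P ω δl - ω n * δl n)
    (ω : Dual K V) (X : V) :
    P ω (δh X) + (-δh (sharp ω) (sharp (h X)) - ω n * P (h X) δl - h X n * P ω δl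
      - ω n * h X n * δl2) + ω δn * l X + ω n * δl X = 0 := by
  rw [← hsharp ω (δh X), ← hsharp (h X) δl, apply_sharp_h hsharp Psymm c1,
    apply_sharp_h hsharp Psymm c1, hδn, hsymm X n, δhsymm n]
  linear_combination (-(ω n * δl2) - P ω δl) * c4 X + δhsymm X (sharp ω)

theorem linearized_P_l_relation
    (hsharp : ∀ ω χ : Dual K V, χ (sharp ω) = P ω χ)
    (Psymm : ∀ ω χ : Dual K V, P ω χ = P χ ω)
    (c2 : ∀ ω : Dual K V, P ω l + l2 * ω n = 0)
    (c3 : l n + n2 * l2 = 1)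
    (δhsymm : ∀ X Y : V, δh X Y = δh Y X)
    (hδn : ∀ ω : Dual K V,
      ω δn = -δh n (sharp ω) - n2 * ω n * δl2 - n2 * P ω δl - ω n * δl n)
    (ω : Dual K V) :
    (-δh (sharp ω) (sharp l) - ω n * P l δl - l n * P ω δl - ω n * l n * δl2)
      + P ω δl + δl2 * ω n + l2 * ω δn = 0 := by
  rw [← hsharp l δl, apply_sharp_l hsharp Psymm c2, apply_sharp_l hsharp Psymm c2, hδn,
    δhsymm n]
  linear_combination (-(ω n * δl2) - P ω δl) * c3

theorem linearized_l_n_relation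
    (hsharp : ∀ ω χ : Dual K V, χ (sharp ω) = P ω χ)
    (Psymm : ∀ ω χ : Dual K V, P ω χ = P χ ω)
    (c2 : ∀ ω : Dual K V, P ω l + l2 * ω n = 0)
    (c3 : l n + n2 * l2 = 1)
    (hδn : ∀ ω : Dual K V,
      ω δn = -δh n (sharp ω) - n2 * ω n * δl2 - n2 * P ω δl - ω n * δl n) :
    δl n + l δn + (-δh n n - n2 * (n2 * δl2 + 2 * δl n)) * l2 + n2 * δl2 = 0 := by
  rw [hδn, ← hsharp l δl, apply_sharp_l hsharp Psymm c2, apply_sharp_l hsharp Psymm c2]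
  linear_combination (-(δl n) - n2 * δl2) * c3

theorem linearized_h_n_relation (hsymm : ∀ X Y : V, h X Y = h Y X)
    (hsharp : ∀ ω χ : Dual K V, χ (sharp ω) = P ω χ)
    (Psymm : ∀ ω χ : Dual K V, P ω χ = P χ ω)
    (c1 : ∀ (ω : Dual K V) (X : V), P ω (h X) + ω n * l X = ω X)
    (c4 : ∀ X : V, h n X + n2 * l X = 0)
    (hδn : ∀ ω : Dual K V,
      ω δn = -δh n (sharp ω) - n2 * ω n * δl2 - n2 * P ω δl - ω n * δl n) (X : V) :
    δh n X + h δn X + (-δh n n - n2 * (n2 * δl2 + 2 * δl n)) * l X + n2 * δl X = 0 := by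
  rw [hsymm δn, hδn, ← hsharp (h X) δl, apply_sharp_h hsharp Psymm c1,
    apply_sharp_h hsharp Psymm c1, hsymm X n]
  linear_combination (-δl2 * n2 - δl n) * c4 X

end HypersurfaceData

theorem stmt_11_general
    (V : Type*) [AddCommGroup V] [Module ℝ V]
    (h : V →ₗ[ℝ] V →ₗ[ℝ] ℝ) (hsymm : ∀ X Y : V, h X Y = h Y X)
    (l : Module.Dual ℝ V) (l2 : ℝ)
    (P : Module.Dual ℝ V →ₗ[ℝ] Module.Dual ℝ V →ₗ[ℝ] ℝ)
    (Psymm : ∀ ω χ : Module.Dual ℝ V, P ω χ = P χ ω)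
    (n : V) (n2 : ℝ)
    (c1 : ∀ (ω : Module.Dual ℝ V) (X : V), P ω (h X) + ω n * l X = ω X)
    (c2 : ∀ ω : Module.Dual ℝ V, P ω l + l2 * ω n = 0)
    (c3 : l n + n2 * l2 = 1)
    (c4 : ∀ X : V, h n X + n2 * l X = 0)
    -- the "sharp" of P: χ(P(ω,·)♯) = P(ω,χ)
    (sharpP : Module.Dual ℝ V → V)
    (hsharp : ∀ ω χ : Module.Dual ℝ V, χ (sharpP ω) = P ω χ)
    -- first-order perturbations of the hypersurface metric data:
    (δh : V →ₗ[ℝ] V →ₗ[ℝ] ℝ) (δhsymm : ∀ X Y : V, δh X Y = δh Y X)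
    (δl : Module.Dual ℝ V) (δl2 : ℝ)
    -- δn is the vector characterized by the explicit formula:
    (δn : V)
    (hδn : ∀ ω : Module.Dual ℝ V,
      ω δn = -δh n (sharpP ω) - n2 * ω n * δl2 - n2 * P ω δl - ω n * δl n) :
    let δP : Module.Dual ℝ V → Module.Dual ℝ V → ℝ := fun ω χ =>
      -δh (sharpP ω) (sharpP χ) - ω n * P χ δl - χ n * P ω δl - ω n * χ n * δl2
    let δn2 : ℝ := -δh n n - n2 * (n2 * δl2 + 2 * δl n)
    (∀ (ω : Module.Dual ℝ V) (X : V),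
      P ω (δh X) + δP ω (h X) + ω δn * l X + ω n * δl X = 0) ∧
    (∀ ω : Module.Dual ℝ V, δP ω l + P ω δl + δl2 * ω n + l2 * ω δn = 0) ∧
    (δl n + l δn + δn2 * l2 + n2 * δl2 = 0) ∧
    (∀ X : V, δh n X + h δn X + δn2 * l X + n2 * δl X = 0) := by
  intro δP δn2
  exact ⟨HypersurfaceData.linearized_P_h_relation hsymm hsharp Psymm c1 c4 δhsymm hδn,
    HypersurfaceData.linearized_P_l_relation hsharp Psymm c2 c3 δhsymm hδn,
    HypersurfaceData.linearized_l_n_relation hsharp Psymm c2 c3 hδn,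
    HypersurfaceData.linearized_h_n_relation hsymm hsharp Psymm c1 c4 hδn⟩

/-- The explicit formulas for (δP, δn, δn2) satisfy the linearized compatibility
relations (Lemma 4.2 of Nolan–Reina–Sousa, pointwise version). -/
theorem stmt_11
    (V : Type*) [AddCommGroup V] [Module ℝ V] [FiniteDimensional ℝ V]
    (h : V →ₗ[ℝ] V →ₗ[ℝ] ℝ) (hsymm : ∀ X Y : V, h X Y = h Y X)
    (l : Module.Dual ℝ V) (l2 : ℝ)
    (P : Module.Dual ℝ V →ₗ[ℝ] Module.Dual ℝ V →ₗ[ℝ] ℝ)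
    (Psymm : ∀ ω χ : Module.Dual ℝ V, P ω χ = P χ ω)
    (n : V) (n2 : ℝ)
    (c1 : ∀ (ω : Module.Dual ℝ V) (X : V), P ω (h X) + ω n * l X = ω X)
    (c2 : ∀ ω : Module.Dual ℝ V, P ω l + l2 * ω n = 0)
    (c3 : l n + n2 * l2 = 1)
    (c4 : ∀ X : V, h n X + n2 * l X = 0)
    -- the "sharp" of P: χ(P(ω,·)♯) = P(ω,χ)
    (sharpP : Module.Dual ℝ V → V)
    (hsharp : ∀ ω χ : Module.Dual ℝ V, χ (sharpP ω) = P ω χ)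
    -- first-order perturbations of the hypersurface metric data:
    (δh : V →ₗ[ℝ] V →ₗ[ℝ] ℝ) (δhsymm : ∀ X Y : V, δh X Y = δh Y X)
    (δl : Module.Dual ℝ V) (δl2 : ℝ)
    -- δn is the vector characterized by the explicit formula:
    (δn : V)
    (hδn : ∀ ω : Module.Dual ℝ V,
      ω δn = -δh n (sharpP ω) - n2 * ω n * δl2 - n2 * P ω δl - ω n * δl n) :
    let δP : Module.Dual ℝ V → Module.Dual ℝ V → ℝ := fun ω χ =>
      -δh (sharpP ω) (sharpP χ) - ω n * P χ δl - χ n * P ω δl - ω n * χ n * δl2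
    let δn2 : ℝ := -δh n n - n2 * (n2 * δl2 + 2 * δl n)
    (∀ (ω : Module.Dual ℝ V) (X : V),
      P ω (δh X) + δP ω (h X) + ω δn * l X + ω n * δl X = 0) ∧
    (∀ ω : Module.Dual ℝ V, δP ω l + P ω δl + δl2 * ω n + l2 * ω δn = 0) ∧
    (δl n + l δn + δn2 * l2 + n2 * δl2 = 0) ∧
    (∀ X : V, δh n X + h δn X + δn2 * l X + n2 * δl X = 0) :=
  stmt_11_general V h hsymm l l2 P Psymm n n2 c1 c2 c3 c4 sharpP hsharp δh δhsymm δl δl2 δn hδn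
end

section
/- Under a rigging transformation with background gauge fields (λ ≠ 0, v ∈ V) and first-order gauge fields (δλ, δv) (with δv = δW·n + P(δZ,·)♯, n2·δW + δZ(n) = 0), the transformed perturbation of n2 satisfies δn2' = −2(δλ/λ³)·n2 + δn2/λ² = −2(δλ/λ)·n2' + δn2/λ², where n2' = n2/λ². Consequently, at a null point (n2 = 0), δn2' = δn2/λ², so the sign of δn2 at null points is invariant under all rigging transformations. -/
theorem HasDerivAt.div_sq {𝕜 : Type*} [NontriviallyNormedField 𝕜] {f g : 𝕜 → 𝕜}
    {f' g' x : 𝕜} (hf : HasDerivAt f f' x) (hg : HasDerivAt g g' x) (hx : g x ≠ 0) :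
    HasDerivAt (fun y => f y / g y ^ 2) (-2 * (g' / g x ^ 3) * f x + f' / g x ^ 2) x := by
  refine (hf.fun_div (hg.fun_pow 2) (pow_ne_zero 2 hx)).congr_deriv ?_
  simp only [Nat.cast_ofNat, Nat.add_one_sub_one, pow_one]
  field_simp
  ring

/-- Transformation of the first-order perturbation of n2 under rigging transformations
(Lemma 5.4 and its Corollary): differentiating n2' = n2/λ² in the perturbation parameter
gives δn2' = −2(δλ/λ³)n2 + δn2/λ² = −2(δλ/λ)n2' + δn2/λ²; at a null point (n2 = 0) this
reduces to δn2' = δn2/λ², so the sign of δn2 is invariant under rigging transformations. -/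
theorem stmt_13
    (n2fam lamfam : ℝ → ℝ)
    (hn2 : DifferentiableAt ℝ n2fam 0)
    (hlamdiff : DifferentiableAt ℝ lamfam 0)
    (hl0 : lamfam 0 ≠ 0) :
    let lam0 : ℝ := lamfam 0
    let dlam : ℝ := deriv lamfam 0
    let dn2 : ℝ := deriv n2fam 0
    let dn2' : ℝ := deriv (fun ε => n2fam ε / (lamfam ε) ^ 2) 0
    (dn2' = -2 * (dlam / lam0 ^ 3) * n2fam 0 + dn2 / lam0 ^ 2) ∧
    (dn2' = -2 * (dlam / lam0) * (n2fam 0 / lam0 ^ 2) + dn2 / lam0 ^ 2) ∧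
    (n2fam 0 = 0 →
      dn2' = dn2 / lam0 ^ 2 ∧
      (0 < dn2' ↔ 0 < dn2) ∧ (dn2' < 0 ↔ dn2 < 0) ∧ (dn2' = 0 ↔ dn2 = 0)) := by
  intro lam0 dlam dn2 dn2'
  have hdn2' : dn2' = -2 * (dlam / lam0 ^ 3) * n2fam 0 + dn2 / lam0 ^ 2 :=
    (hn2.hasDerivAt.div_sq hlamdiff.hasDerivAt hl0).deriv
  refine ⟨hdn2', ?_, fun hnull => ?_⟩
  · rw [hdn2']
    field_simp
  · have hdn2'_null : dn2' = dn2 / lam0 ^ 2 := by rw [hdn2', hnull]; ring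
    have hpos : 0 < lam0 ^ 2 := by positivity
    rw [hdn2'_null, div_pos_iff_of_pos_right hpos, div_lt_iff₀ hpos, zero_mul,
      div_eq_zero_iff, or_iff_left hpos.ne']
    exact ⟨rfl, Iff.rfl, Iff.rfl, Iff.rfl⟩
end

section
/- At a non-null point (n2 ≠ 0) with m = dim V > 1, assume the background junction conditions hold, which at non-null points force [Y] = 0, and let δτ be the linearization of the shell tensor: δτ^{ab} = −n^a n^b(δP^{cd}[Y]_{cd} + P^{cd}[δY]_{cd}) + (n^a P^{bc} + n^b P^{ac})(δn^d[Y]_{cd} + n^d[δY]_{cd}) − P^{ac}P^{bd}(δn2·[Y]_{cd} + n2·[δY]_{cd}) − P^{ab}(−n2(δP^{cd}[Y]_{cd} + P^{cd}[δY]_{cd}) + n^c n^d[δY]_{cd}). With [Y] = 0 this reduces to δτ^{ab} = (n^a P^{bc} + n^b P^{ac}) n^d[δY]_{cd} − n2·P^{ac}P^{bd}[δY]_{cd} − P^{ab}(−n2·P^{cd}[δY]_{cd} + n^c n^d[δY]_{cd}). Then δτ = 0 if and only if [δY] = 0, provided additionally that the map X ↦ P(h(X,·),·)♯ together with n spans V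 (equivalently, relations (i)–(iv) hold and n2 ≠ 0). -/
/-!
In matrix form, with `w = [δY] n`, `t = tr (P [δY])` and `q = nᵀ [δY] n`, the linearized shell
tensor is `δτ = -t n nᵀ + n (P w)ᵀ + (P w) nᵀ - n2 P [δY] P - (q - n2 t) P`. Conjugating by `h`
and using `P h = 1 - n lᵀ`, `h n = -n2 l` collapses it to `h δτ h = (n2 t - q) h - n2 [δY]`.
So `δτ = 0` forces `n2 [δY] = k h` with `k = n2 t - q`; contracting this with `P` and with `n ⊗ n`
gives `n2 k = m n2 k`, hence `k = 0` because `m ≠ 1`, and then `[δY] = 0` because `n2 ≠ 0`.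
-/

open Matrix

section CommRing

variable {ι R : Type*} [Fintype ι] [CommRing R]

def linearizedShellTensor (P Y : Matrix ι ι R) (n : ι → R) (n2 : R) : Matrix ι ι R :=
  -(P * Y).trace • vecMulVec n n + vecMulVec n (P *ᵥ Y *ᵥ n) + vecMulVec (P *ᵥ Y *ᵥ n) n
    - n2 • (P * Y * P) - (-n2 * (P * Y).trace + n ⬝ᵥ Y *ᵥ n) • P

@[simp]
lemma linearizedShellTensor_zero (P : Matrix ι ι R) (n : ι → R) (n2 : R) :
    linearizedShellTensor P 0 n n2 = 0 := by
  simp [linearizedShellTensor]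

lemma linearizedShellTensor_apply {P Y : Matrix ι ι R} (hP : Pᵀ = P) (hY : Yᵀ = Y)
    (n : ι → R) (n2 : R) (a b : ι) :
    linearizedShellTensor P Y n n2 a b =
      -(n a * n b) * (∑ c, ∑ d, P c d * Y c d)
      + (∑ c, (n a * P b c + n b * P a c) * (∑ d, n d * Y c d))
      - (∑ c, ∑ d, P a c * P b d * (n2 * Y c d))
      - P a b * (-n2 * (∑ c, ∑ d, P c d * Y c d) + (∑ c, ∑ d, n c * n d * Y c d)) := by
  have hYsymm (c d : ι) : Y d c = Y c d := congrFun (congrFun hY c) d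
  have hPsymm (c d : ι) : P d c = P c d := congrFun (congrFun hP c) d
  simp only [linearizedShellTensor, Matrix.sub_apply, Matrix.add_apply, Matrix.smul_apply,
    vecMulVec_apply, trace, diag, mul_apply, mulVec, dotProduct, smul_eq_mul, hYsymm]
  have hlin : ∑ c, (n a * P b c + n b * P a c) * ∑ d, n d * Y c d
      = n a * ∑ c, P b c * ∑ d, Y c d * n d + (∑ c, P a c * ∑ d, Y c d * n d) * n b := by
    simp only [Finset.mul_sum, Finset.sum_mul, add_mul, Finset.sum_add_distrib]
    congr 1 <;> exact Finset.sum_congr rfl fun c _ => Finset.sum_congr rfl fun d _ => by ring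
  have hquad : ∑ c, ∑ d, P a c * P b d * (n2 * Y c d)
      = n2 * ∑ d, (∑ c, P a c * Y d c) * P d b := by
    simp only [Finset.mul_sum, Finset.sum_mul, hPsymm]
    rw [Finset.sum_comm]
    exact Finset.sum_congr rfl fun c _ => Finset.sum_congr rfl fun d _ => by rw [hYsymm]; ring
  have hnormal : ∑ c, ∑ d, n c * n d * Y c d = ∑ c, n c * ∑ d, Y c d * n d := by
    simp only [Finset.mul_sum]
    exact Finset.sum_congr rfl fun c _ => Finset.sum_congr rfl fun d _ => by ring
  rw [hlin, hquad, hnormal]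
  ring

lemma vecMulVec_mulVec_comm (u v w : ι → R) : vecMulVec u v *ᵥ w = (v ⬝ᵥ w) • u := by
  rw [vecMulVec_mulVec, op_smul_eq_smul]

lemma mul_vecMulVec_mul (A B : Matrix ι ι R) (u v : ι → R) :
    A * vecMulVec u v * B = vecMulVec (A *ᵥ u) (v ᵥ* B) := by
  rw [mul_vecMulVec, vecMulVec_mul]

variable [DecidableEq ι] {H P Y : Matrix ι ι R} {l n : ι → R} {n2 : R}

lemma mul_eq_one_sub_vecMulVec (hH : Hᵀ = H) (hP : Pᵀ = P)
    (hPH : P * H + vecMulVec n l = 1) : H * P = 1 - vecMulVec l n := by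
  have := congrArg transpose hPH
  rw [transpose_add, transpose_mul, hH, hP, transpose_vecMulVec, transpose_one] at this
  exact eq_sub_of_add_eq this

lemma conj_linearizedShellTensor (hH : Hᵀ = H) (hP : Pᵀ = P)
    (hPH : P * H + vecMulVec n l = 1) (hHn : H *ᵥ n + n2 • l = 0) (hY : Yᵀ = Y) :
    H * linearizedShellTensor P Y n n2 * H
      = (n2 * (P * Y).trace - n ⬝ᵥ Y *ᵥ n) • H - n2 • Y := by
  have hHP := mul_eq_one_sub_vecMulVec hH hP hPH
  have hPH' : P * H = 1 - vecMulVec n l := eq_sub_of_add_eq hPH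
  have hHn' : H *ᵥ n = -n2 • l := by rw [neg_smul]; exact eq_neg_of_add_eq_zero_left hHn
  have hnH : n ᵥ* H = -n2 • l := by rw [← mulVec_transpose, hH, hHn']
  have hnY : n ᵥ* Y = Y *ᵥ n := by rw [← mulVec_transpose, hY]
  have hHPw : ∀ w, H *ᵥ (P *ᵥ w) = w - (n ⬝ᵥ w) • l := by
    intro w
    rw [mulVec_mulVec, hHP, sub_mulVec, one_mulVec, vecMulVec_mulVec_comm]
  have hPwH : ∀ w, (P *ᵥ w) ᵥ* H = w - (n ⬝ᵥ w) • l := by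
    intro w
    rw [← vecMul_transpose, hP, vecMul_vecMul, hPH', vecMul_sub, vecMul_one, vecMul_vecMulVec,
      dotProduct_comm]
  have hHPYPH : H * (P * Y * P) * H
      = Y - vecMulVec l (Y *ᵥ n) - vecMulVec (Y *ᵥ n) l + (n ⬝ᵥ Y *ᵥ n) • vecMulVec l l := by
    calc H * (P * Y * P) * H = (H * P) * Y * (P * H) := by simp only [Matrix.mul_assoc]
      _ = _ := by
        simp only [hHP, hPH', Matrix.sub_mul, Matrix.one_mul, vecMulVec_mul, Matrix.mul_sub,
          Matrix.mul_one, mul_vecMulVec, sub_mulVec, vecMulVec_mulVec_comm, hnY, sub_vecMulVec,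
          smul_vecMulVec, dotProduct_comm (Y *ᵥ n) n]
        module
  have hHPH : H * P * H = H + n2 • vecMulVec l l := by
    rw [Matrix.mul_assoc, hPH', Matrix.mul_sub, Matrix.mul_one, mul_vecMulVec, hHn', neg_smul,
      neg_vecMulVec, smul_vecMulVec, sub_neg_eq_add]
  simp only [linearizedShellTensor, Matrix.mul_add, Matrix.add_mul, Matrix.mul_sub, Matrix.sub_mul,
    Matrix.mul_smul, Matrix.smul_mul, mul_vecMulVec_mul, hHPYPH, hHPH, hHPw, hPwH, hHn', hnH]
  simp only [vecMulVec_sub, sub_vecMulVec, smul_vecMulVec, vecMulVec_smul, neg_smul,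
    neg_vecMulVec, vecMulVec_neg, smul_sub, smul_add]
  module

end CommRing

variable {ι K : Type*} [Fintype ι] [DecidableEq ι] [Field K]
  {H P Y : Matrix ι ι K} {l n : ι → K} {n2 : K}

theorem eq_zero_of_linearizedShellTensor_eq_zero (hcard : (Fintype.card ι : K) ≠ 1)
    (hH : Hᵀ = H) (hP : Pᵀ = P) (hPH : P * H + vecMulVec n l = 1) (hHn : H *ᵥ n + n2 • l = 0)
    (hn2 : n2 ≠ 0) (hY : Yᵀ = Y) (hτ : linearizedShellTensor P Y n n2 = 0) : Y = 0 := by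
  set k := n2 * (P * Y).trace - n ⬝ᵥ Y *ᵥ n
  have hYH : n2 • Y = k • H := by
    have := conj_linearizedShellTensor hH hP hPH hHn hY
    rw [hτ, Matrix.mul_zero, Matrix.zero_mul] at this
    exact (sub_eq_zero.mp this.symm).symm
  have htrace : n2 * (P * Y).trace = k * (Fintype.card ι - n ⬝ᵥ l) := by
    have := congrArg (fun M => (P * M).trace) hYH
    simpa only [Matrix.mul_smul, trace_smul, smul_eq_mul, eq_sub_of_add_eq hPH, trace_sub,
      trace_one, trace_vecMulVec] using this
  have hnormal : n2 * (n ⬝ᵥ Y *ᵥ n) = k * (-n2 * (n ⬝ᵥ l)) := by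
    have := congrArg (fun M => n ⬝ᵥ M *ᵥ n) hYH
    simpa only [smul_mulVec, dotProduct_smul, smul_eq_mul, eq_neg_of_add_eq_zero_left hHn,
      dotProduct_neg, neg_mul] using this
  have hk0 : k = 0 := by
    have : n2 * (k * (Fintype.card ι - 1)) = 0 := by linear_combination hnormal - n2 * htrace
    simpa [hn2, sub_eq_zero, hcard] using this
  simpa [hk0, hn2] using hYH

theorem stmt_15_general
    (m : ℕ) (hm : 1 < m)
    (h P : Fin m → Fin m → ℝ) (l n : Fin m → ℝ) (n2 : ℝ)
    (hsymm : ∀ a b, h a b = h b a)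
    (Psymm : ∀ a b, P a b = P b a)
    (c1 : ∀ a b, (∑ c, P a c * h c b) + n a * l b = if a = b then (1 : ℝ) else 0)
    (c4 : ∀ a, (∑ b, h a b * n b) + n2 * l a = 0)
    (hnn : n2 ≠ 0)
    -- background jump [Y] (the background junction conditions force it to vanish):
    (YB : Fin m → Fin m → ℝ) (hYB : ∀ a b, YB a b = 0)
    -- perturbations: δP, δn, δn2 of the inverse data, and the jump [δY]:
    (δP : Fin m → Fin m → ℝ)
    (δn : Fin m → ℝ) (δn2 : ℝ)
    (δY : Fin m → Fin m → ℝ) (δYsymm : ∀ a b, δY a b = δY b a) :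
    let δτ : Fin m → Fin m → ℝ := fun a b =>
      -(n a * n b) * ((∑ c, ∑ d, δP c d * YB c d) + (∑ c, ∑ d, P c d * δY c d))
      + (∑ c, (n a * P b c + n b * P a c)
          * ((∑ d, δn d * YB c d) + (∑ d, n d * δY c d)))
      - (∑ c, ∑ d, P a c * P b d * (δn2 * YB c d + n2 * δY c d))
      - P a b * (-(n2) * ((∑ c, ∑ d, δP c d * YB c d) + (∑ c, ∑ d, P c d * δY c d))
          + (∑ c, ∑ d, n c * n d * δY c d))
    (∀ a b, δτ a b = 0) ↔ (∀ a b, δY a b = 0) := by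
  intro δτ
  have hH : (of h)ᵀ = of h := by ext a b; exact hsymm b a
  have hP : (of P)ᵀ = of P := by ext a b; exact Psymm b a
  have hY : (of δY)ᵀ = of δY := by ext a b; exact δYsymm b a
  have hτ (a b : Fin m) : δτ a b = linearizedShellTensor (of P) (of δY) n n2 a b := by
    rw [linearizedShellTensor_apply hP hY]
    simp [δτ, hYB]
  constructor
  · intro hτ0 a b
    have hPH : of P * of h + vecMulVec n l = 1 := by
      ext a b; simpa [mul_apply, vecMulVec_apply, one_apply] using c1 a b
    have hHn : of h *ᵥ n + n2 • l = 0 := by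
      ext a; simpa [mulVec, dotProduct] using c4 a
    have hcard : (Fintype.card (Fin m) : ℝ) ≠ 1 := by
      rw [Fintype.card_fin]; exact_mod_cast hm.ne'
    have hτ_matrix : linearizedShellTensor (of P) (of δY) n n2 = 0 := by
      ext a b; rw [← hτ]; exact hτ0 a b
    exact congrFun₂ (eq_zero_of_linearizedShellTensor_eq_zero hcard hH hP hPH hHn hnn hY hτ_matrix) a b
  · intro hY0 a b
    have hδY : of δY = 0 := by ext a b; exact hY0 a b
    rw [hτ, hδY, linearizedShellTensor_zero]
    rfl

/-- First-order junction conditions at a NON-NULL point (n2 ≠ 0): with the background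
junction conditions forcing [Y] = 0, the linearized shell δτ vanishes iff [δY] = 0. -/
theorem stmt_15
    (m : ℕ) (hm : 1 < m)
    (h P : Fin m → Fin m → ℝ) (l n : Fin m → ℝ) (l2 n2 : ℝ)
    (hsymm : ∀ a b, h a b = h b a)
    (Psymm : ∀ a b, P a b = P b a)
    (c1 : ∀ a b, (∑ c, P a c * h c b) + n a * l b = if a = b then (1 : ℝ) else 0)
    (c2 : ∀ a, (∑ b, P a b * l b) + l2 * n a = 0)
    (c3 : (∑ a, n a * l a) + n2 * l2 = 1)
    (c4 : ∀ a, (∑ b, h a b * n b) + n2 * l a = 0)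
    (hnn : n2 ≠ 0)
    -- background jump [Y] (the background junction conditions force it to vanish):
    (YB : Fin m → Fin m → ℝ) (hYB : ∀ a b, YB a b = 0)
    -- perturbations: δP, δn, δn2 of the inverse data, and the jump [δY]:
    (δP : Fin m → Fin m → ℝ) (δPsymm : ∀ a b, δP a b = δP b a)
    (δn : Fin m → ℝ) (δn2 : ℝ)
    (δY : Fin m → Fin m → ℝ) (δYsymm : ∀ a b, δY a b = δY b a) :
    let δτ : Fin m → Fin m → ℝ := fun a b =>
      -(n a * n b) * ((∑ c, ∑ d, δP c d * YB c d) + (∑ c, ∑ d, P c d * δY c d))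
      + (∑ c, (n a * P b c + n b * P a c)
          * ((∑ d, δn d * YB c d) + (∑ d, n d * δY c d)))
      - (∑ c, ∑ d, P a c * P b d * (δn2 * YB c d + n2 * δY c d))
      - P a b * (-(n2) * ((∑ c, ∑ d, δP c d * YB c d) + (∑ c, ∑ d, P c d * δY c d))
          + (∑ c, ∑ d, n c * n d * δY c d))
    (∀ a b, δτ a b = 0) ↔ (∀ a b, δY a b = 0) :=
  stmt_15_general m hm h P l n n2 hsymm Psymm c1 c4 hnn YB hYB δP δn δn2 δY δYsymm
end

section
/- At a null point (n2 = 0, hence l(n) = 1, h(n,·) = 0) with m = dim V > 1, assume the background junction conditions for null points hold: n^a[Y]_{ab} = 0 and P^{ab}[Y]_{ab} = 0. Then the linearized shell δτ^{ab} (as in the previous statement, with n2 = 0 substituted in the background terms) vanishes if and only if: (1) δn^b[Y]_{ab} + n^b[δY]_{ab} = 0, (2) δP^{ab}[Y]_{ab} + P^{ab}[δY]_{ab} = 0, and (3) δn2·P^{ac}[Y]_{bc} = 0. -/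
/-!
Write `T = n ⬝ᵥ W`. Multiplying `δτ` on the right by `h` kills the `n ⊗ n` terms (`h n = 0`) and,
because `P h = 1 - n ⊗ l` and `[Y] n = 0`, leaves `n ⊗ W - δn2 • P [Y] - T • 1`. Multiplying on
the left by `h` as well gives `δn2 • [Y] + T • h = 0`, whose trace against `P` is `(m - 1) T`
since `tr (P h) = m - n ⬝ᵥ l = m - 1`. Hence `T = 0`, then `n ⊗ W = 0` forces `W = 0`, and what is
left of `δτ` is `-S • n ⊗ n`, so `S = 0`.
-/

open Matrix

namespace NullJunction

variable {ι R : Type*} [Fintype ι]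

section CommRing

variable [CommRing R] {P h Y : Matrix ι ι R} {n l W : ι → R} {S c : R}

/-- The linearized shell `δτ` at a null point, with `S = δP^{ab}[Y]_{ab} + P^{ab}[δY]_{ab}`,
`W^a = [Y]^a_b δn^b + [δY]^a_b n^b` and `c = δn2`; the coefficient `n^a n^b [δY]_{ab}` of `P`
equals `n ⬝ᵥ W` by the background condition `n^a [Y]_{ab} = 0`. -/
def shell (P Y : Matrix ι ι R) (n W : ι → R) (S c : R) : Matrix ι ι R :=
  -S • vecMulVec n n + vecMulVec n (P *ᵥ W) + vecMulVec (P *ᵥ W) n - c • (P * Y * P)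
    - (n ⬝ᵥ W) • P

theorem shell_zero_eq_neg_smul_vecMulVec (hc : c • (P * Y) = 0) :
    shell P Y n 0 S c = -S • vecMulVec n n := by
  rw [shell, ← Matrix.smul_mul, hc]
  simp

theorem shell_apply (hP : P.IsSymm) (a b : ι) :
    shell P Y n W S c a b = -(n a * n b) * S + ∑ k, (n a * P b k + n b * P a k) * W k
      - ∑ k, ∑ k', P a k * P b k' * (c * Y k k') - P a b * (n ⬝ᵥ W) := by
  have hPYP : (P * Y * P) a b = ∑ k, ∑ k', P a k * P b k' * Y k k' := by
    simp only [mul_apply, Finset.sum_mul]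
    rw [Finset.sum_comm]
    refine Finset.sum_congr rfl fun k _ => Finset.sum_congr rfl fun k' _ => ?_
    rw [hP.apply b k']
    ring
  rw [shell]
  generalize n ⬝ᵥ W = T
  simp only [Matrix.sub_apply, Matrix.add_apply, Matrix.smul_apply, smul_eq_mul,
    vecMulVec_apply, hPYP, mulVec, dotProduct, add_mul, Finset.sum_add_distrib, Finset.mul_sum,
    Finset.sum_mul]
  ring_nf

theorem dotProduct_sum_eq_of_vecMul_eq_zero (hnY : n ᵥ* Y = 0) (v : ι → R)
    (Z : Matrix ι ι R) :
    n ⬝ᵥ (fun a => ∑ b, (v b * Y a b + n b * Z a b)) = ∑ a, ∑ b, n a * n b * Z a b := by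
  have hnYv : ∑ a, ∑ b, n a * (v b * Y a b) = 0 := by
    rw [Finset.sum_comm]
    refine Finset.sum_eq_zero fun b _ => ?_
    simp only [mul_left_comm (n _), ← Finset.mul_sum]
    exact mul_eq_zero_of_right _ (congrFun hnY b)
  simp only [dotProduct, Finset.mul_sum, mul_add, Finset.sum_add_distrib, hnYv, zero_add,
    mul_assoc]

variable [DecidableEq ι]

theorem mul_eq_one_sub_vecMulVec_swap (hP : P.IsSymm) (hh : h.IsSymm)
    (hPh : P * h = 1 - vecMulVec n l) : h * P = 1 - vecMulVec l n := by
  rw [← hP.eq, ← hh.eq, ← transpose_mul, hPh, transpose_sub, transpose_one,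
    transpose_vecMulVec]

theorem shell_mul (hP : P.IsSymm) (hh : h.IsSymm) (hPh : P * h = 1 - vecMulVec n l)
    (hhn : h *ᵥ n = 0) (hYn : Y *ᵥ n = 0) :
    shell P Y n W S c * h = vecMulVec n W - c • (P * Y) - (n ⬝ᵥ W) • 1 := by
  have hnh : n ᵥ* h = 0 := by rw [← mulVec_transpose, hh.eq, hhn]
  have hPW : (P *ᵥ W) ᵥ* h = W - (n ⬝ᵥ W) • l := by
    rw [← vecMul_transpose, hP.eq, vecMul_vecMul, hPh, vecMul_sub, vecMul_one,
      vecMul_vecMulVec, dotProduct_comm]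
  have hPYPh : P * Y * P * h = P * Y := by
    rw [Matrix.mul_assoc _ P, hPh, Matrix.mul_sub, Matrix.mul_one, mul_vecMulVec,
      ← mulVec_mulVec, hYn, mulVec_zero, zero_vecMulVec, sub_zero]
  simp only [shell, Matrix.sub_mul, Matrix.add_mul, Matrix.smul_mul, vecMulVec_mul, hnh,
    hPW, hPYPh, hPh, vecMulVec_zero, vecMulVec_sub, vecMulVec_smul]
  module

theorem mul_shell_mul (hP : P.IsSymm) (hh : h.IsSymm) (hPh : P * h = 1 - vecMulVec n l)
    (hhn : h *ᵥ n = 0) (hnY : n ᵥ* Y = 0) :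
    h * (vecMulVec n W - c • (P * Y) - (n ⬝ᵥ W) • 1) = -(c • Y + (n ⬝ᵥ W) • h) := by
  rw [Matrix.mul_sub, Matrix.mul_sub, mul_vecMulVec, hhn, zero_vecMulVec, Matrix.mul_smul,
    ← Matrix.mul_assoc, mul_eq_one_sub_vecMulVec_swap hP hh hPh, Matrix.sub_mul,
    vecMulVec_mul, hnY, vecMulVec_zero, Matrix.one_mul, sub_zero, Matrix.mul_smul,
    Matrix.mul_one]
  abel

theorem trace_mul_eq_card_sub_one (hPh : P * h = 1 - vecMulVec n l) (hnl : n ⬝ᵥ l = 1) :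
    trace (P * h) = Fintype.card ι - 1 := by
  rw [hPh, trace_sub, trace_one, trace_vecMulVec, hnl]

end CommRing

section Field

variable [DecidableEq ι] [Field R] {P h Y : Matrix ι ι R} {n l W : ι → R} {S c : R}

theorem shell_eq_zero_iff (hcard : (Fintype.card ι : R) ≠ 1) (hP : P.IsSymm)
    (hh : h.IsSymm) (hY : Y.IsSymm) (hPh : P * h = 1 - vecMulVec n l) (hhn : h *ᵥ n = 0)
    (hnl : n ⬝ᵥ l = 1) (hnY : n ᵥ* Y = 0) (hPY : trace (P * Y) = 0) :
    shell P Y n W S c = 0 ↔ W = 0 ∧ S = 0 ∧ c • (P * Y) = 0 := by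
  have hn : n ≠ 0 := by
    rintro rfl
    simp at hnl
  have hYn : Y *ᵥ n = 0 := by rw [← vecMul_transpose, hY.eq, hnY]
  constructor
  · intro hτ
    have hτh := shell_mul (W := W) (S := S) (c := c) hP hh hPh hhn hYn
    rw [hτ, Matrix.zero_mul] at hτh
    have hC : c • Y + (n ⬝ᵥ W) • h = 0 := by
      have := mul_shell_mul (W := W) (c := c) hP hh hPh hhn hnY
      rwa [← hτh, Matrix.mul_zero, zero_eq_neg] at this
    have hT : n ⬝ᵥ W = 0 := by
      have htr := congrArg (fun M => trace (P * M)) hC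
      simp only [Matrix.mul_add, Matrix.mul_smul, trace_add, trace_smul, hPY,
        trace_mul_eq_card_sub_one hPh hnl, trace_zero, smul_eq_mul,
        mul_zero, zero_add] at htr
      exact (mul_eq_zero.mp htr).resolve_right (sub_ne_zero.mpr hcard)
    have hcPY : c • (P * Y) = 0 := by
      rw [hT, zero_smul, add_zero] at hC
      rw [← Matrix.mul_smul, hC, Matrix.mul_zero]
    have hW : W = 0 := by
      rw [hT, zero_smul, sub_zero, hcPY, sub_zero, eq_comm, vecMulVec_eq_zero] at hτh
      exact hτh.resolve_left hn
    subst hW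
    rw [shell_zero_eq_neg_smul_vecMulVec hcPY, neg_smul, neg_eq_zero, smul_eq_zero] at hτ
    exact ⟨rfl, hτ.resolve_right (by simpa using hn), hcPY⟩
  · rintro ⟨rfl, rfl, hcPY⟩
    rw [shell_zero_eq_neg_smul_vecMulVec hcPY, neg_zero, zero_smul]

end Field

end NullJunction

open NullJunction

theorem stmt_16_general
    (m : ℕ) (hm : 1 < m)
    (h P : Fin m → Fin m → ℝ) (l n : Fin m → ℝ) (l2 n2 : ℝ)
    (hsymm : ∀ a b, h a b = h b a)
    (Psymm : ∀ a b, P a b = P b a)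
    (c1 : ∀ a b, (∑ c, P a c * h c b) + n a * l b = if a = b then (1 : ℝ) else 0)
    (c3 : (∑ a, n a * l a) + n2 * l2 = 1)
    (c4 : ∀ a, (∑ b, h a b * n b) + n2 * l a = 0)
    (hnull : n2 = 0)
    -- background jump [Y] satisfying the null junction conditions:
    (YB : Fin m → Fin m → ℝ) (YBsymm : ∀ a b, YB a b = YB b a)
    (hJ1 : ∀ b, (∑ a, n a * YB a b) = 0)
    (hJ2 : (∑ a, ∑ b, P a b * YB a b) = 0)
    -- perturbations of the inverse data and the jump [δY]:
    (δP : Fin m → Fin m → ℝ)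
    (δn : Fin m → ℝ) (δn2 : ℝ)
    (δY : Fin m → Fin m → ℝ) :
    let δτ : Fin m → Fin m → ℝ := fun a b =>
      -(n a * n b) * ((∑ c, ∑ d, δP c d * YB c d) + (∑ c, ∑ d, P c d * δY c d))
      + (∑ c, (n a * P b c + n b * P a c)
          * ((∑ d, δn d * YB c d) + (∑ d, n d * δY c d)))
      - (∑ c, ∑ d, P a c * P b d * (δn2 * YB c d + n2 * δY c d))
      - P a b * (-(n2) * ((∑ c, ∑ d, δP c d * YB c d) + (∑ c, ∑ d, P c d * δY c d))
          + (∑ c, ∑ d, n c * n d * δY c d))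
    (∀ a b, δτ a b = 0) ↔
      ((∀ a, (∑ b, (δn b * YB a b + n b * δY a b)) = 0) ∧
        ((∑ a, ∑ b, (δP a b * YB a b + P a b * δY a b)) = 0) ∧
        (∀ a b, δn2 * (∑ c, P a c * YB b c) = 0)) := by
  intro δτ
  subst hnull
  let W : Fin m → ℝ := fun a => ∑ b, (δn b * YB a b + n b * δY a b)
  let S : ℝ := ∑ a, ∑ b, (δP a b * YB a b + P a b * δY a b)
  have hPs : (of P).IsSymm := IsSymm.ext fun a b => Psymm b a
  have hhs : (of h).IsSymm := IsSymm.ext fun a b => hsymm b a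
  have hYs : (of YB).IsSymm := IsSymm.ext fun a b => YBsymm b a
  have hPh : of P * of h = 1 - vecMulVec n l := by
    ext a b
    simp [mul_apply, one_apply, vecMulVec_apply, ← c1 a b]
  have hhn : of h *ᵥ n = 0 := funext fun a => by simpa [mulVec, dotProduct] using c4 a
  have hnl : n ⬝ᵥ l = 1 := by simpa [dotProduct] using c3
  have hnY : n ᵥ* of YB = 0 := funext hJ1
  have hPY : trace (of P * of YB) = 0 := by
    rw [← hJ2]
    simp [trace, mul_apply, YBsymm]
  have hcard : (Fintype.card (Fin m) : ℝ) ≠ 1 := by simpa using hm.ne'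
  have hτ : ∀ a b, δτ a b = shell (of P) (of YB) n W S δn2 a b := by
    intro a b
    have hnW : n ⬝ᵥ W = ∑ c, ∑ d, n c * n d * δY c d :=
      dotProduct_sum_eq_of_vecMul_eq_zero hnY δn (of δY)
    rw [shell_apply hPs, hnW]
    simp only [δτ, W, S, of_apply, Finset.sum_add_distrib, zero_mul, add_zero, neg_zero,
      zero_add]
  have hcond : (∀ a b, δn2 * ∑ c, P a c * YB b c = 0) ↔ δn2 • (of P * of YB) = 0 := by
    simp only [← Matrix.ext_iff, Matrix.smul_apply, mul_apply, of_apply, Matrix.zero_apply,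
      smul_eq_mul, YBsymm]
  calc (∀ a b, δτ a b = 0) ↔ shell (of P) (of YB) n W S δn2 = 0 := by
        simp only [hτ, ← Matrix.ext_iff, Matrix.zero_apply]
    _ ↔ W = 0 ∧ S = 0 ∧ δn2 • (of P * of YB) = 0 :=
        shell_eq_zero_iff hcard hPs hhs hYs hPh hhn hnl hnY hPY
    _ ↔ _ := by rw [hcond, funext_iff]; rfl

/-- First-order junction conditions at a NULL point (n2 = 0): assuming the background
null junction conditions n^a[Y]_{ab} = 0 and P^{ab}[Y]_{ab} = 0, the linearized shell δτ
vanishes iff the three first-order null junction conditions hold. -/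
theorem stmt_16
    (m : ℕ) (hm : 1 < m)
    (h P : Fin m → Fin m → ℝ) (l n : Fin m → ℝ) (l2 n2 : ℝ)
    (hsymm : ∀ a b, h a b = h b a)
    (Psymm : ∀ a b, P a b = P b a)
    (c1 : ∀ a b, (∑ c, P a c * h c b) + n a * l b = if a = b then (1 : ℝ) else 0)
    (c2 : ∀ a, (∑ b, P a b * l b) + l2 * n a = 0)
    (c3 : (∑ a, n a * l a) + n2 * l2 = 1)
    (c4 : ∀ a, (∑ b, h a b * n b) + n2 * l a = 0)
    (hnull : n2 = 0)
    -- background jump [Y] satisfying the null junction conditions: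
    (YB : Fin m → Fin m → ℝ) (YBsymm : ∀ a b, YB a b = YB b a)
    (hJ1 : ∀ b, (∑ a, n a * YB a b) = 0)
    (hJ2 : (∑ a, ∑ b, P a b * YB a b) = 0)
    -- perturbations of the inverse data and the jump [δY]:
    (δP : Fin m → Fin m → ℝ) (δPsymm : ∀ a b, δP a b = δP b a)
    (δn : Fin m → ℝ) (δn2 : ℝ)
    (δY : Fin m → Fin m → ℝ) (δYsymm : ∀ a b, δY a b = δY b a) :
    let δτ : Fin m → Fin m → ℝ := fun a b =>
      -(n a * n b) * ((∑ c, ∑ d, δP c d * YB c d) + (∑ c, ∑ d, P c d * δY c d))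
      + (∑ c, (n a * P b c + n b * P a c)
          * ((∑ d, δn d * YB c d) + (∑ d, n d * δY c d)))
      - (∑ c, ∑ d, P a c * P b d * (δn2 * YB c d + n2 * δY c d))
      - P a b * (-(n2) * ((∑ c, ∑ d, δP c d * YB c d) + (∑ c, ∑ d, P c d * δY c d))
          + (∑ c, ∑ d, n c * n d * δY c d))
    (∀ a b, δτ a b = 0) ↔
      ((∀ a, (∑ b, (δn b * YB a b + n b * δY a b)) = 0) ∧
        ((∑ a, ∑ b, (δP a b * YB a b + P a b * δY a b)) = 0) ∧
        (∀ a b, δn2 * (∑ c, P a c * YB b c) = 0)) :=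
  stmt_16_general m hm h P l n l2 n2 hsymm Psymm c1 c3 c4 hnull YB YBsymm hJ1 hJ2 δP δn δn2 δY
end

section
/- At a null point (n2 = 0) assume the background null junction conditions n^a[Y]_{ab} = 0 and P^{ab}[Y]_{ab} = 0 hold, together with the first-order null junction conditions: δn^b[Y]_{ab} + n^b[δY]_{ab} = 0, δP^{ab}[Y]_{ab} + P^{ab}[δY]_{ab} = 0, and δn2·P^{ac}[Y]_{bc} = 0. Apply a rigging transformation with gauge fields (λ ≠ 0, W, Z) satisfying Z(n) = 0 (the null-point constraint), so that the primed inverse data transforms by n' = n/λ (using n2 = 0), n2' = 0, P'^{ab} = P^{ab} − v^a n^b − v^b n^a with v^a = W n^a + P^{ab}Z_b, and the primed perturbed inverse data transforms by the formulas of Lemma 5.4 specialized to n2 = 0; assume further that [δY'] relates to [δY] by the first-order transformation law with common gauge fields on both sides. Then the primed first-order null junction conditions hold: δn'^b[Y']_{ab} + n'^b[δY']_{ab} = 0, δP'^{ab}[Y']_{ab} + P'^{ab}[δY']_{ab} = 0, and δn2'·P'^{ac}[Y']_{bc} = 0. -/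
/-!
At a null point the gauge vector `v = W n + P Z` satisfies `δn2 [Y]_{ab} v^b = 0`, since
`n^b [Y]_{ab} = 0` and `δn2 P^{ac} [Y]_{bc} = 0`. Substituting the transformation laws, each
primed condition becomes a combination of the unprimed ones and of `δn2 [Y]_{ab} v^b`. In the
scalar condition the terms of `δP'` and `P'` symmetric in `a, b` pair up, by the symmetry of
`[Y]` and `[δY]`, into `v^a (δn^b [Y]_{ab} + n^b [δY]_{ab})` and `n^b [Y]_{ab}`, which vanish.
-/

namespace NullJunction

variable {ι R : Type*} [Fintype ι]

section CommRing

variable [CommRing R]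

theorem mul_sum_gauge_mul_eq_zero {P Y : ι → ι → R} {n Z : ι → R} {δn2 : R} (W : R)
    (hP : ∀ a b, P a b = P b a) (hn : ∀ a, ∑ b, n b * Y a b = 0)
    (hPY : ∀ a b, δn2 * ∑ c, P a c * Y b c = 0) (a : ι) :
    δn2 * ∑ b, (W * n b + ∑ c, P b c * Z c) * Y a b = 0 :=
  calc δn2 * ∑ b, (W * n b + ∑ c, P b c * Z c) * Y a b
      = W * (δn2 * ∑ b, n b * Y a b) + ∑ c, Z c * (δn2 * ∑ b, P c b * Y a b) := by
        simp only [add_mul, Finset.sum_add_distrib, Finset.sum_mul, Finset.mul_sum, mul_add]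
        rw [Finset.sum_comm (f := fun b c => _)]
        congr 1
        · exact Finset.sum_congr rfl fun b _ => by ring
        · exact Finset.sum_congr rfl fun c _ => Finset.sum_congr rfl fun b _ => by
            rw [hP]; ring
    _ = 0 := by simp only [hn, hPY, mul_zero, Finset.sum_const_zero, add_zero]

def transformP (P : ι → ι → R) (n v : ι → R) : ι → ι → R :=
  fun a b => P a b - v a * n b - v b * n a

def transformδP (n2 δn2 : R) (δP : ι → ι → R) (n δn v dv : ι → R) : ι → ι → R :=
  fun a b => δP a b + n2 * (dv a * v b + dv b * v a) - (n a * dv b + n b * dv a)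
    + v a * v b * δn2 - (v a * δn b + v b * δn a)

theorem sum_sum_transformδP_mul_add_eq_zero {P δP Y δY : ι → ι → R} {n δn v dv : ι → R}
    {n2 δn2 : R} (lam dlam : R) (hn2 : n2 = 0)
    (hY : ∀ a b, Y a b = Y b a) (hδY : ∀ a b, δY a b = δY b a)
    (hn : ∀ a, ∑ b, n b * Y a b = 0) (hPY : ∑ a, ∑ b, P a b * Y a b = 0)
    (hδn : ∀ a, ∑ b, (δn b * Y a b + n b * δY a b) = 0)
    (hδP : ∑ a, ∑ b, (δP a b * Y a b + P a b * δY a b) = 0)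
    (hv : ∀ a, δn2 * ∑ b, v b * Y a b = 0) :
    ∑ a, ∑ b, (transformδP n2 δn2 δP n δn v dv a b * (lam * Y a b)
      + transformP P n v a b * (lam * δY a b + dlam * Y a b)) = 0 := by
  subst hn2
  set A : ι → ι → R := fun a b =>
    lam * (δP a b * Y a b + P a b * δY a b) + dlam * (P a b * Y a b)
      + lam * v a * (δn2 * (v b * Y a b))
  set B : ι → ι → R := fun a b =>
    -(lam * dv a + dlam * v a) * (n b * Y a b) - lam * v a * (δn b * Y a b + n b * δY a b)
  have hsplit : ∀ a b, transformδP 0 δn2 δP n δn v dv a b * (lam * Y a b)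
      + transformP P n v a b * (lam * δY a b + dlam * Y a b) = A a b + B a b + B b a := by
    intro a b
    simp only [transformδP, transformP, A, B, hY b a, hδY b a]
    ring
  have hA : ∑ a, ∑ b, A a b = 0 := by
    have hAa : ∀ a, ∑ b, A a b
        = lam * ∑ b, (δP a b * Y a b + P a b * δY a b) + dlam * ∑ b, P a b * Y a b := by
      intro a
      simp only [A, Finset.sum_add_distrib, ← Finset.mul_sum, hv, mul_zero, add_zero]
    rw [Finset.sum_congr rfl fun a _ => hAa a, Finset.sum_add_distrib, ← Finset.mul_sum,
      ← Finset.mul_sum, hδP, hPY, mul_zero, mul_zero, add_zero]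
  have hB : ∀ a, ∑ b, B a b = 0 := by
    intro a
    simp only [B, Finset.sum_sub_distrib, ← Finset.mul_sum, hn, hδn]
    ring
  calc _ = ∑ a, ∑ b, A a b + ∑ a, ∑ b, B a b + ∑ a, ∑ b, B b a := by
        simp only [hsplit, Finset.sum_add_distrib]
    _ = 0 := by
        rw [Finset.sum_comm (f := fun a b => B b a)]
        simp only [hA, hB, Finset.sum_const_zero, add_zero]

end CommRing

section Field

variable [Field R]

def transformδn (lam dlam n2 δn2 : R) (n δn v dv : ι → R) : ι → R :=
  fun a => -(dlam / lam) * (n a / lam) + (1 / lam) * (δn a - n2 * dv a - v a * δn2)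

theorem sum_transformδn_mul_add_eq_zero {Y δY : ι → R} {n δn v dv : ι → R}
    {lam n2 δn2 : R} (dlam : R) (hlam : lam ≠ 0) (hn2 : n2 = 0)
    (hδn : ∑ b, (δn b * Y b + n b * δY b) = 0) (hv : δn2 * ∑ b, v b * Y b = 0) :
    ∑ b, (transformδn lam dlam n2 δn2 n δn v dv b * (lam * Y b)
      + n b / lam * (lam * δY b + dlam * Y b)) = 0 :=
  calc _ = ∑ b, (δn b * Y b + n b * δY b) - δn2 * ∑ b, v b * Y b := by
        rw [Finset.mul_sum, ← Finset.sum_sub_distrib]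
        refine Finset.sum_congr rfl fun b _ => ?_
        simp only [transformδn, hn2]
        field_simp
        ring
    _ = 0 := by rw [hδn, hv, sub_zero]

theorem mul_sum_transformP_mul_eq_zero {P Y : ι → ι → R} {n v : ι → R}
    {n2 δn2 : R} (lam dlam : R) (hn2 : n2 = 0) (hn : ∀ a, ∑ b, n b * Y a b = 0)
    (hPY : ∀ a b, δn2 * ∑ c, P a c * Y b c = 0) (hv : ∀ a, δn2 * ∑ b, v b * Y a b = 0)
    (a b : ι) :
    (-2 * (dlam / lam ^ 3) * n2 + δn2 / lam ^ 2) * ∑ c, transformP P n v a c * (lam * Y b c)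
      = 0 :=
  calc _ = lam / lam ^ 2 * ((δn2 * ∑ c, P a c * Y b c) - v a * (δn2 * ∑ c, n c * Y b c)
        - n a * (δn2 * ∑ c, v c * Y b c)) := by
        simp only [transformP, hn2, Finset.mul_sum, ← Finset.sum_sub_distrib]
        exact Finset.sum_congr rfl fun c _ => by ring
    _ = 0 := by rw [hPY, hn, hv]; ring

end Field

end NullJunction

open NullJunction

theorem stmt_17_general
    (m : ℕ)
    (P : Fin m → Fin m → ℝ) (n : Fin m → ℝ) (n2 : ℝ)
    (Psymm : ∀ a b, P a b = P b a)
    (hnull : n2 = 0)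
    -- background jump [Y] and the background null junction conditions:
    (YB : Fin m → Fin m → ℝ) (YBsymm : ∀ a b, YB a b = YB b a)
    (hJ1 : ∀ b, (∑ a, n a * YB a b) = 0)
    (hJ2 : (∑ a, ∑ b, P a b * YB a b) = 0)
    -- perturbations of the inverse data and the jump [δY]:
    (δP : Fin m → Fin m → ℝ)
    (δn : Fin m → ℝ) (δn2 : ℝ)
    (δY : Fin m → Fin m → ℝ) (δYsymm : ∀ a b, δY a b = δY b a)
    -- first-order null junction conditions:
    (hδJ1 : ∀ a, (∑ b, (δn b * YB a b + n b * δY a b)) = 0)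
    (hδJ2 : (∑ a, ∑ b, (δP a b * YB a b + P a b * δY a b)) = 0)
    (hδJ3 : ∀ a b, δn2 * (∑ c, P a c * YB b c) = 0)
    -- gauge fields (common to both sides), with the null-point constraints:
    (lam : ℝ) (hlam : lam ≠ 0) (W : ℝ) (Z : Fin m → ℝ)
    (dlam dW : ℝ) (dZ : Fin m → ℝ) :
    -- transformed quantities:
    let v : Fin m → ℝ := fun a => W * n a + ∑ b, P a b * Z b
    let dv : Fin m → ℝ := fun a => dW * n a + ∑ b, P a b * dZ b
    let n' : Fin m → ℝ := fun a => n a / lam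
    let n2' : ℝ := n2 / lam ^ 2
    let P' : Fin m → Fin m → ℝ := fun a b => P a b - v a * n b - v b * n a
    let dn2' : ℝ := -2 * (dlam / lam ^ 3) * n2 + δn2 / lam ^ 2
    let dn' : Fin m → ℝ := fun a =>
      -(dlam / lam) * n' a + (1 / lam) * (δn a - n2 * dv a - v a * δn2)
    let dP' : Fin m → Fin m → ℝ := fun a b =>
      δP a b + n2 * (dv a * v b + dv b * v a) - (n a * dv b + n b * dv a)
        + v a * v b * δn2 - (v a * δn b + v b * δn a)
    let Y' : Fin m → Fin m → ℝ := fun a b => lam * YB a b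
    let dY' : Fin m → Fin m → ℝ := fun a b => lam * δY a b + dlam * YB a b
    -- primed first-order null junction conditions:
    (∀ a, (∑ b, (dn' b * Y' a b + n' b * dY' a b)) = 0) ∧
    ((∑ a, ∑ b, (dP' a b * Y' a b + P' a b * dY' a b)) = 0) ∧
    (∀ a b, dn2' * (∑ c, P' a c * Y' b c) = 0) := by
  intro v
  have hnY : ∀ a, ∑ b, n b * YB a b = 0 := fun a => by simpa only [YBsymm a] using hJ1 a
  have hv : ∀ a, δn2 * ∑ b, v b * YB a b = 0 := mul_sum_gauge_mul_eq_zero W Psymm hnY hδJ3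
  exact ⟨fun a => sum_transformδn_mul_add_eq_zero dlam hlam hnull (hδJ1 a) (hv a),
    sum_sum_transformδP_mul_add_eq_zero lam dlam hnull YBsymm δYsymm hnY hJ2 hδJ1 hδJ2 hv,
    mul_sum_transformP_mul_eq_zero lam dlam hnull hnY hδJ3 hv⟩

/-- Rigging independence of the junction conditions to first order at NULL points
(Prop. 6.8, pointwise index version): if the background and first-order null junction
conditions hold, they continue to hold after a rigging transformation with common gauge
fields on both sides. -/
theorem stmt_17
    (m : ℕ) (hm : 1 < m)
    (h P : Fin m → Fin m → ℝ) (l n : Fin m → ℝ) (l2 n2 : ℝ)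
    (hsymm : ∀ a b, h a b = h b a)
    (Psymm : ∀ a b, P a b = P b a)
    (c1 : ∀ a b, (∑ c, P a c * h c b) + n a * l b = if a = b then (1 : ℝ) else 0)
    (c2 : ∀ a, (∑ b, P a b * l b) + l2 * n a = 0)
    (c3 : (∑ a, n a * l a) + n2 * l2 = 1)
    (c4 : ∀ a, (∑ b, h a b * n b) + n2 * l a = 0)
    (hnull : n2 = 0)
    -- background jump [Y] and the background null junction conditions:
    (YB : Fin m → Fin m → ℝ) (YBsymm : ∀ a b, YB a b = YB b a)
    (hJ1 : ∀ b, (∑ a, n a * YB a b) = 0)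
    (hJ2 : (∑ a, ∑ b, P a b * YB a b) = 0)
    -- perturbations of the inverse data and the jump [δY]:
    (δP : Fin m → Fin m → ℝ) (δPsymm : ∀ a b, δP a b = δP b a)
    (δn : Fin m → ℝ) (δn2 : ℝ)
    (δY : Fin m → Fin m → ℝ) (δYsymm : ∀ a b, δY a b = δY b a)
    -- first-order null junction conditions:
    (hδJ1 : ∀ a, (∑ b, (δn b * YB a b + n b * δY a b)) = 0)
    (hδJ2 : (∑ a, ∑ b, (δP a b * YB a b + P a b * δY a b)) = 0)
    (hδJ3 : ∀ a b, δn2 * (∑ c, P a c * YB b c) = 0)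
    -- gauge fields (common to both sides), with the null-point constraints:
    (lam : ℝ) (hlam : lam ≠ 0) (W : ℝ) (Z : Fin m → ℝ)
    (hZ : (∑ a, Z a * n a) = 0)
    (dlam dW : ℝ) (dZ : Fin m → ℝ) (hdZ : (∑ a, dZ a * n a) = 0) :
    -- transformed quantities:
    let v : Fin m → ℝ := fun a => W * n a + ∑ b, P a b * Z b
    let dv : Fin m → ℝ := fun a => dW * n a + ∑ b, P a b * dZ b
    let n' : Fin m → ℝ := fun a => n a / lam
    let n2' : ℝ := n2 / lam ^ 2
    let P' : Fin m → Fin m → ℝ := fun a b => P a b - v a * n b - v b * n a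
    let dn2' : ℝ := -2 * (dlam / lam ^ 3) * n2 + δn2 / lam ^ 2
    let dn' : Fin m → ℝ := fun a =>
      -(dlam / lam) * n' a + (1 / lam) * (δn a - n2 * dv a - v a * δn2)
    let dP' : Fin m → Fin m → ℝ := fun a b =>
      δP a b + n2 * (dv a * v b + dv b * v a) - (n a * dv b + n b * dv a)
        + v a * v b * δn2 - (v a * δn b + v b * δn a)
    let Y' : Fin m → Fin m → ℝ := fun a b => lam * YB a b
    let dY' : Fin m → Fin m → ℝ := fun a b => lam * δY a b + dlam * YB a b
    -- primed first-order null junction conditions: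
    (∀ a, (∑ b, (dn' b * Y' a b + n' b * dY' a b)) = 0) ∧
    ((∑ a, ∑ b, (dP' a b * Y' a b + P' a b * dY' a b)) = 0) ∧
    (∀ a b, dn2' * (∑ c, P' a c * Y' b c) = 0) :=
  stmt_17_general m P n n2 Psymm hnull YB YBsymm hJ1 hJ2 δP δn δn2 δY δYsymm hδJ1 hδJ2 hδJ3 lam hlam
    W Z dlam dW dZ
end

section
/- Let g be a nondegenerate symmetric bilinear form on a real vector space, A a symmetric bilinear form, X a vector, and define S(A)(X)_{αβ} via S(A)^μ_{αβ} = (1/2)(∇_α A^μ_β + ∇_β A_α^μ − ∇^μ A_{αβ}) and H^α = A^α_μ X^μ on a pseudo-Riemannian manifold (M, g) with Levi-Civita connection ∇. Then the identity (L_X A)_{αβ} + 2 X_μ S(A)^μ_{αβ} = (L_H g)_{αβ} holds, where L denotes the Lie derivative and indices are raised with g. -/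
/-!
Lowering the index of `H` with `g` undoes the raising by `ginv` (a one-sided inverse of a
square matrix is two-sided), so `(L_H g)_{αβ} = ∇_α H_β + ∇_β H_α` becomes
`X^μ ∇_α A_{βμ} + A_{βμ} ∇_α X^μ + (α ↔ β)`; similarly `2 X_μ S(A)^μ_{αβ}` becomes
`X^μ (∇_α A_{μβ} + ∇_β A_{αμ} - ∇_μ A_{αβ})`. Adding `(L_X A)_{αβ}`, the transport term
`X^μ ∇_μ A_{αβ}` cancels, and the rest matches by the symmetry of `A` and of `∇_α A_{βγ}` in
`β, γ`.
-/

open Matrix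

namespace Matrix

variable {ι R : Type*} [Fintype ι] [DecidableEq ι] [CommRing R]

theorem mulVec_mulVec_of_mul_eq_one {P Q : Matrix ι ι R} (h : P * Q = 1) (v : ι → R) :
    P *ᵥ (Q *ᵥ v) = v := by
  rw [mulVec_mulVec, h, one_mulVec]

theorem mulVec_dotProduct_mulVec_of_transpose_mul_eq_one {P Q : Matrix ι ι R}
    (h : Pᵀ * Q = 1) (v w : ι → R) : (P *ᵥ v) ⬝ᵥ (Q *ᵥ w) = v ⬝ᵥ w := by
  rw [← vecMul_transpose, ← dotProduct_mulVec, mulVec_mulVec_of_mul_eq_one h]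

end Matrix

theorem stmt_18_general
    (ι : Type*) [Fintype ι] [DecidableEq ι]
    (g ginv : ι → ι → ℝ)
    (gsymm : ∀ a b, g a b = g b a)
    (hinv : ∀ a b, (∑ c, ginv a c * g c b) = if a = b then (1 : ℝ) else 0)
    (A : ι → ι → ℝ) (Asymm : ∀ a b, A a b = A b a)
    (DA : ι → ι → ι → ℝ) (DAsymm : ∀ a b c, DA a b c = DA a c b)
    (X : ι → ℝ) (DX : ι → ι → ℝ) :
    let S : ι → ι → ι → ℝ := fun μ α β =>
      (1 / 2) * ((∑ ν, ginv μ ν * DA α ν β) + (∑ ν, ginv μ ν * DA β α ν)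
        - (∑ ν, ginv μ ν * DA ν α β))
    let LXA : ι → ι → ℝ := fun α β =>
      (∑ μ, X μ * DA μ α β) + (∑ μ, A μ β * DX α μ) + (∑ μ, A α μ * DX β μ)
    let DH : ι → ι → ℝ := fun β α =>
      ∑ ν, ginv α ν * ((∑ μ, DA β ν μ * X μ) + (∑ μ, A ν μ * DX β μ))
    let LHg : ι → ι → ℝ := fun α β =>
      (∑ μ, g μ β * DH α μ) + (∑ μ, g α μ * DH β μ)
    ∀ α β, LXA α β + 2 * (∑ μ, (∑ ν, g μ ν * X ν) * S μ α β) = LHg α β := by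
  intro S LXA DH LHg α β
  have hg_inv : of g * of ginv = 1 :=
    mul_eq_one_comm.mp <| ext fun a b => by
      simpa only [mul_apply, of_apply, one_apply] using hinv a b
  have hg_symm : (of g)ᵀ = of g := ext fun a b => gsymm b a
  have lower : ∀ (F : ι → ℝ) a, ∑ μ, g a μ * ∑ ν, ginv μ ν * F ν = F a := fun F a =>
    congrFun (mulVec_mulVec_of_mul_eq_one hg_inv F) a
  have pairing : ∀ v w : ι → ℝ,
      ∑ μ, (∑ ν, g μ ν * v ν) * ∑ ν, ginv μ ν * w ν = ∑ ν, v ν * w ν :=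
    mulVec_dotProduct_mulVec_of_transpose_mul_eq_one (hg_symm ▸ hg_inv)
  have hS : 2 * ∑ μ, (∑ ν, g μ ν * X ν) * S μ α β
      = ∑ ν, X ν * (DA α ν β + DA β α ν - DA ν α β) := by
    rw [← pairing X, Finset.mul_sum]
    refine Finset.sum_congr rfl fun μ _ => ?_
    simp only [S, mul_add, mul_sub, Finset.sum_add_distrib, Finset.sum_sub_distrib]
    ring
  have hDH : ∀ α β, ∑ μ, g β μ * DH α μ = (∑ μ, DA α β μ * X μ) + ∑ μ, A β μ * DX α μ :=
    fun α β => lower _ β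
  simp only [LXA, LHg, hS, fun μ => gsymm μ β, hDH]
  simp only [fun μ => Asymm μ β, fun ν => DAsymm α ν β, mul_add, mul_sub, Finset.sum_add_distrib,
    Finset.sum_sub_distrib, mul_comm (DA _ _ _)]
  ring

/-- Lemma B.2 (Mars 2005), pointwise jet version: for a symmetric (0,2)-tensor A and a
vector X on a pseudo-Riemannian manifold, with S(A)^μ_{αβ} = ½(∇_α A^μ_β + ∇_β A_α^μ −
∇^μ A_{αβ}) and H^α = A^α_μ X^μ, one has (L_X A)_{αβ} + 2 X_μ S(A)^μ_{αβ} = (L_H g)_{αβ}.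
Here g, ginv are the metric and its inverse, DA α β γ = ∇_α A_{βγ}, DX α β = ∇_α X^β,
and the Lie derivatives are expressed through the Levi-Civita connection (torsion-free,
metric-compatible, so ∇g = 0 and indices are raised through ginv under ∇). -/
theorem stmt_18
    (ι : Type*) [Fintype ι] [DecidableEq ι]
    (g ginv : ι → ι → ℝ)
    (gsymm : ∀ a b, g a b = g b a)
    (ginvsymm : ∀ a b, ginv a b = ginv b a)
    (hinv : ∀ a b, (∑ c, ginv a c * g c b) = if a = b then (1 : ℝ) else 0)
    (A : ι → ι → ℝ) (Asymm : ∀ a b, A a b = A b a)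
    (DA : ι → ι → ι → ℝ) (DAsymm : ∀ a b c, DA a b c = DA a c b)
    (X : ι → ℝ) (DX : ι → ι → ℝ) :
    let S : ι → ι → ι → ℝ := fun μ α β =>
      (1 / 2) * ((∑ ν, ginv μ ν * DA α ν β) + (∑ ν, ginv μ ν * DA β α ν)
        - (∑ ν, ginv μ ν * DA ν α β))
    let LXA : ι → ι → ℝ := fun α β =>
      (∑ μ, X μ * DA μ α β) + (∑ μ, A μ β * DX α μ) + (∑ μ, A α μ * DX β μ)
    let DH : ι → ι → ℝ := fun β α =>
      ∑ ν, ginv α ν * ((∑ μ, DA β ν μ * X μ) + (∑ μ, A ν μ * DX β μ))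
    let LHg : ι → ι → ℝ := fun α β =>
      (∑ μ, g μ β * DH α μ) + (∑ μ, g α μ * DH β μ)
    ∀ α β, LXA α β + 2 * (∑ μ, (∑ ν, g μ ν * X ν) * S μ α β) = LHg α β :=
  stmt_18_general ι g ginv gsymm hinv A Asymm DA DAsymm X DX
end

section
/- On a pseudo-Riemannian manifold (M,g) with Levi-Civita connection ∇ and curvature convention ∇_α∇_β ω_μ − ∇_β∇_α ω_μ = R_{αβμ}{}^ν ω_ν, for any vector field x the second Lie derivative of the metric satisfies L_x L_x g_{αβ} = L_{∇_x x} g_{αβ} − 2 R_{αγβμ} x^γ x^μ + 2 (∇_α x_μ)(∇_β x^μ). -/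
/-! Substituting the Ricci identity `∇_μ∇_α x^ν = ∇_α∇_μ x^ν - R_{μαρ}{}^ν x^ρ` into
`x^μ ∇_μ (L_x g)_{αβ}` produces the second-derivative part of `L_{∇_x x} g` together with two
curvature terms, which the symmetries of the Riemann tensor identify with
`-2 R_{αγβμ} x^γ x^μ`. Of the four first-derivative terms, two make up the rest of
`L_{∇_x x} g`, and the other two coincide because `g` is symmetric. -/

open Finset

section

variable {ι : Type*} [Fintype ι]

theorem sum_sum_mul_mul_comm (w a : ι → ℝ) (B : ι → ι → ℝ) :
    ∑ μ, (∑ ν, w ν * B μ ν) * a μ = ∑ ν, w ν * ∑ μ, a μ * B μ ν := by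
  simp only [sum_mul, mul_sum]
  rw [sum_comm]
  exact sum_congr rfl fun _ _ => sum_congr rfl fun _ _ => by ring

theorem sum_metric_contract_symm (g : ι → ι → ℝ) (gsymm : ∀ a b, g a b = g b a)
    (Dx : ι → ι → ℝ) (α β : ι) :
    ∑ μ, (∑ ν, g μ ν * Dx β ν) * Dx α μ = ∑ μ, (∑ ν, g μ ν * Dx α ν) * Dx β μ := by
  simp only [sum_mul]
  rw [sum_comm]
  exact sum_congr rfl fun _ _ => sum_congr rfl fun _ _ => by rw [gsymm]; ring

theorem contracted_ricci_identity (g : ι → ι → ℝ) (x : ι → ℝ)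
    (DDx : ι → ι → ι → ℝ) (Riem : ι → ι → ι → ι → ℝ)
    (hComm : ∀ a b c, DDx a b c - DDx b a c = -(∑ μ, Riem a b μ c * x μ)) (α β : ι) :
    ∑ μ, x μ * ∑ ν, g β ν * DDx μ α ν
      = ∑ ν, g β ν * ∑ μ, x μ * DDx α μ ν
        - ∑ γ, x γ * ∑ ν, g β ν * ∑ μ, Riem γ α μ ν * x μ := by
  have hDD : ∀ μ ν, DDx μ α ν = DDx α μ ν - ∑ ρ, Riem μ α ρ ν * x ρ := fun μ ν => by
    linarith [hComm μ α ν]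
  simp only [hDD, mul_sub, sum_sub_distrib, mul_sum]
  rw [sum_comm (f := fun μ ν => x μ * (g β ν * DDx α μ ν))]
  congr 1
  exact sum_congr rfl fun _ _ => sum_congr rfl fun _ _ => by ring

theorem lowered_curvature_swap_pairs (g : ι → ι → ℝ) (Riem : ι → ι → ι → ι → ℝ)
    (hanti1 : ∀ a b c d, Riem a b c d = -Riem b a c d)
    (hanti2 : ∀ a b c d, (∑ ν, Riem a b c ν * g ν d) = -(∑ ν, Riem a b d ν * g ν c))
    (a b c d : ι) :
    ∑ ν, Riem a b c ν * g ν d = ∑ ν, Riem b a d ν * g ν c := by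
  simp only [hanti1 a b, neg_mul, sum_neg_distrib, hanti2 b a c d, neg_neg]

theorem sum_sum_mul_mul_of_pair_symm (T : ι → ι → ι → ι → ℝ)
    (hpair : ∀ a b c d, T a b c d = T c d a b) (x : ι → ℝ) (α β : ι) :
    ∑ γ, ∑ μ, T γ β μ α * x γ * x μ = ∑ γ, ∑ μ, T γ α μ β * x γ * x μ := by
  rw [sum_comm]
  exact sum_congr rfl fun _ _ => sum_congr rfl fun _ _ => by rw [hpair]; ring

theorem curvature_quadratic_eq_lowered (g : ι → ι → ℝ) (gsymm : ∀ a b, g a b = g b a)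
    (Riem : ι → ι → ι → ι → ℝ) (x : ι → ℝ) (α β : ι) :
    ∑ γ, x γ * ∑ ν, g β ν * ∑ μ, Riem γ α μ ν * x μ
      = ∑ γ, ∑ μ, (∑ ν, Riem γ α μ ν * g ν β) * x γ * x μ := by
  refine sum_congr rfl fun γ _ => ?_
  simp only [mul_sum, sum_mul]
  rw [sum_comm]
  exact sum_congr rfl fun _ _ => sum_congr rfl fun _ _ => by rw [gsymm]; ring

theorem curvature_quadratic_add_swap (g : ι → ι → ℝ) (gsymm : ∀ a b, g a b = g b a)
    (Riem : ι → ι → ι → ι → ℝ)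
    (hanti1 : ∀ a b c d, Riem a b c d = -Riem b a c d)
    (hanti2 : ∀ a b c d, (∑ ν, Riem a b c ν * g ν d) = -(∑ ν, Riem a b d ν * g ν c))
    (hpair : ∀ a b c d, (∑ ν, Riem a b c ν * g ν d) = (∑ ν, Riem c d a ν * g ν b))
    (x : ι → ℝ) (α β : ι) :
    (∑ γ, x γ * ∑ ν, g β ν * ∑ μ, Riem γ α μ ν * x μ)
        + ∑ γ, x γ * ∑ ν, g α ν * ∑ μ, Riem γ β μ ν * x μ
      = 2 * ∑ γ, ∑ μ, (∑ ν, Riem α γ β ν * g ν μ) * x γ * x μ := by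
  rw [curvature_quadratic_eq_lowered g gsymm, curvature_quadratic_eq_lowered g gsymm,
    sum_sum_mul_mul_of_pair_symm _ hpair x α β, ← two_mul]
  simp only [lowered_curvature_swap_pairs g Riem hanti1 hanti2 _ α _ β]

end

/-- Lemma B.3 (Mars 2005), metric case, pointwise jet version: for a vector field x,
L_x L_x g_{αβ} = L_{∇_x x} g_{αβ} − 2 R_{αγβμ} x^γ x^μ + 2 (∇_α x_μ)(∇_β x^μ), with the
curvature convention ∇_α∇_β ω_μ − ∇_β∇_α ω_μ = R_{αβμ}{}^ν ω_ν (so for vectors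
∇_a∇_b x^c − ∇_b∇_a x^c = −R_{abμ}{}^c x^μ), Riemann antisymmetries and pair symmetry.
Here Dx a b = ∇_a x^b, DDx a b c = ∇_a∇_b x^c, Riem a b c d = R_{abc}{}^d, and the metric
is parallel so Lie derivatives along vector fields are expressed via ∇. -/
theorem stmt_19
    (ι : Type*) [Fintype ι]
    (g : ι → ι → ℝ) (gsymm : ∀ a b, g a b = g b a)
    (x : ι → ℝ) (Dx : ι → ι → ℝ) (DDx : ι → ι → ι → ℝ)
    (Riem : ι → ι → ι → ι → ℝ)
    (hComm : ∀ a b c, DDx a b c - DDx b a c = -(∑ μ, Riem a b μ c * x μ))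
    (hanti1 : ∀ a b c d, Riem a b c d = -Riem b a c d)
    (hanti2 : ∀ a b c d, (∑ ν, Riem a b c ν * g ν d) = -(∑ ν, Riem a b d ν * g ν c))
    (hpair : ∀ a b c d, (∑ ν, Riem a b c ν * g ν d) = (∑ ν, Riem c d a ν * g ν b)) :
    let Xl : ι → ι → ℝ := fun α β => ∑ μ, g β μ * Dx α μ        -- ∇_α x_β
    let Lxg : ι → ι → ℝ := fun α β => Xl α β + Xl β α           -- (L_x g)_{αβ}
    let LLxg : ι → ι → ℝ := fun α β =>                          -- (L_x L_x g)_{αβ}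
      (∑ μ, x μ * ((∑ ν, g β ν * DDx μ α ν) + (∑ ν, g α ν * DDx μ β ν)))
        + (∑ μ, Lxg μ β * Dx α μ) + (∑ μ, Lxg α μ * Dx β μ)
    let Da : ι → ι → ℝ := fun α c =>                            -- ∇_α (∇_x x)^c
      ∑ μ, (Dx α μ * Dx μ c + x μ * DDx α μ c)
    let Lag : ι → ι → ℝ := fun α β =>                           -- (L_{∇_x x} g)_{αβ}
      (∑ c, g β c * Da α c) + (∑ c, g α c * Da β c)
    let Rlow : ι → ι → ι → ι → ℝ := fun a b c d =>              -- R_{abcd}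
      ∑ ν, Riem a b c ν * g ν d
    ∀ α β, LLxg α β
      = Lag α β - 2 * (∑ γ, ∑ μ, Rlow α γ β μ * x γ * x μ)
        + 2 * (∑ μ, Xl α μ * Dx β μ) := by
  intro Xl Lxg LLxg Da Lag Rlow α β
  simp only [LLxg, Lag, Da, Lxg, Xl, Rlow, mul_add, add_mul, sum_add_distrib,
    contracted_ricci_identity g x DDx Riem hComm, sum_sum_mul_mul_comm]
  linarith [curvature_quadratic_add_swap g gsymm Riem hanti1 hanti2 hpair x α β,
    sum_metric_contract_symm g gsymm Dx α β]
end
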